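/- arXiv:2202.08984 — 12 statements merged into one kernel-verified Lean document; each statement's English description precedes it below -/
import Mathlib

section
/- For all nonnegative integers n, (1+x)^{n+1} A_n(x) = B_n(x^2) + 2^n x A_n(x^2), where A_n and B_n are the type A and type B Eulerian polynomials. -/
open Polynomial

/-- Type A Eulerian polynomials. -/
noncomputable def eulerianA : ℕ → Polynomial ℚ
  | 0 => 1
  | n + 1 =>
      (C ((n : ℚ) + 1) * X + 1 - X) * eulerianA n +
        X * (1 - X) * derivative (eulerianA n)

/-- Type B Eulerian polynomials. -/
noncomputable def eulerianB : ℕ → Polynomial ℚ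
  | 0 => 1
  | n + 1 =>
      (C (2 * ((n : ℚ) + 1)) * X + 1 - X) * eulerianB n +
        2 * X * (1 - X) * derivative (eulerianB n)

theorem stmt0 (n : ℕ) :
    (1 + X) ^ (n + 1) * eulerianA n =
      (eulerianB n).comp (X ^ 2) + C ((2 : ℚ) ^ n) * X * (eulerianA n).comp (X ^ 2) := by
  induction n with
  | zero =>
      simp [eulerianA, eulerianB]
  | succ n ih =>
      simp only [map_pow, map_ofNat] at ih
      have hd := congrArg derivative ih
      simp only [derivative_mul, derivative_pow, derivative_add, derivative_comp,
        derivative_one, derivative_X, derivative_X_pow, derivative_C_mul, derivative_C,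
        derivative_ofNat, map_pow, map_ofNat, C_eq_natCast, Nat.cast_add, Nat.cast_one,
        Nat.cast_ofNat, map_mul, map_add, map_one, Nat.add_sub_cancel, natCast_comp] at hd
      simp only [eulerianA, eulerianB, add_comp, mul_comp, sub_comp, X_comp, C_comp,
        one_comp, ofNat_comp, natCast_comp, map_pow, map_ofNat, C_eq_natCast, Nat.cast_add,
        Nat.cast_one, map_mul, map_add, map_one, Nat.add_sub_cancel]
      linear_combination (2 * ((n : Polynomial ℚ) + 1) * X ^ 2 + 1 - X ^ 2) * ih +
        (X * (1 - X ^ 2)) * hd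
end

section
/- If f(x) = sum_{i=0}^{floor(n/2)} gamma_i x^i (1+x)^{n-2i} with all gamma_i >= 0, then f(x^2) = sum_{k=0}^n eta_k (-x)^k (1+x)^{2n-2k}, where eta_k = sum_{i=0}^{floor(k/2)} binom(n-2i, k-2i) 2^{k-2i} gamma_i >= 0. In particular every gamma-positive polynomial f yields an alternatingly gamma-positive polynomial f(x^2). -/
open Polynomial Finset

theorem stmt5 (n : ℕ) (f : Polynomial ℝ) (γ : ℕ → ℝ) (hγ : ∀ i, 0 ≤ γ i)
    (hf : f = ∑ i ∈ Finset.range (n / 2 + 1), C (γ i) * X ^ i * (1 + X) ^ (n - 2 * i))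
    (η : ℕ → ℝ)
    (hη : ∀ k, η k = ∑ i ∈ Finset.range (k / 2 + 1),
      ((n - 2 * i).choose (k - 2 * i) : ℝ) * 2 ^ (k - 2 * i) * γ i) :
    f.comp (X ^ 2) =
      (∑ k ∈ Finset.range (n + 1), C (η k) * (-X) ^ k * (1 + X) ^ (2 * n - 2 * k)) ∧
    ∀ k, 0 ≤ η k := by
  refine ⟨?_, fun k => by
    rw [hη]
    exact Finset.sum_nonneg fun i _ => mul_nonneg (by positivity) (hγ i)⟩
  subst hf
  rw [Polynomial.sum_comp]
  have key : ∀ m : ℕ, ((1 : ℝ[X]) + X ^ 2) ^ m =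
      ∑ j ∈ Finset.range (m + 1),
        (-(2 * X)) ^ j * ((1 + X) ^ 2) ^ (m - j) * (m.choose j : ℝ[X]) := by
    intro m
    have h : ((1 : ℝ[X]) + X ^ 2) = -(2 * X) + (1 + X) ^ 2 := by ring
    rw [h, add_pow]
  simp only [mul_comp, C_comp, pow_comp, add_comp, one_comp, X_comp]
  simp only [key, Finset.mul_sum]
  simp only [hη, map_sum, Finset.sum_mul]
  rw [Finset.sum_sigma', Finset.sum_sigma']
  refine Finset.sum_nbij' (fun p => ⟨2 * p.1 + p.2, p.1⟩) (fun p => ⟨p.2, p.1 - 2 * p.2⟩)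
    ?_ ?_ ?_ ?_ ?_
  · rintro ⟨i, j⟩ hp
    simp only [Finset.mem_sigma, Finset.mem_range] at hp ⊢
    omega
  · rintro ⟨k, i⟩ hp
    simp only [Finset.mem_sigma, Finset.mem_range] at hp ⊢
    omega
  · rintro ⟨i, j⟩ hp
    simp only [Finset.mem_sigma, Finset.mem_range] at hp
    simp only [Sigma.mk.inj_iff]
    exact ⟨trivial, heq_of_eq (by omega)⟩
  · rintro ⟨k, i⟩ hp
    simp only [Finset.mem_sigma, Finset.mem_range] at hp
    simp only [Sigma.mk.inj_iff]
    exact ⟨by omega, HEq.rfl⟩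
  · rintro ⟨i, j⟩ hp
    simp only [Finset.mem_sigma, Finset.mem_range] at hp
    obtain ⟨hi, hj⟩ := hp
    have h1 : 2 * i ≤ n := by omega
    have h2 : 2 * i + j - 2 * i = j := by omega
    have h3 : 2 * n - 2 * (2 * i + j) = 2 * (n - 2 * i - j) := by omega
    simp only [h2, h3]
    have h4 : (-X : ℝ[X]) ^ (2 * i + j) = X ^ (2 * i) * (-1) ^ j * X ^ j := by
      rw [neg_pow, pow_add, pow_mul, pow_mul, neg_one_sq, one_pow]
      ring
    rw [map_mul, map_mul, map_natCast, map_pow, h4]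
    have h5 : (-(2 * X) : ℝ[X]) ^ j = (-1) ^ j * 2 ^ j * X ^ j := by
      rw [neg_pow, mul_pow]; ring
    rw [h5]
    simp only [← pow_mul, map_ofNat]
    ring
end

section
/- With notation as above, sum_{i=0}^{floor(n/2)} gamma_i x^{2i} = sum_{k=0}^n xi_k (-x)^k (1+x)^{n-k} = sum_{k=0}^n xi_k x^k (1-x)^{n-k}, where xi_k = sum_{i=0}^{floor(k/2)} binom(n-2i,k-2i) gamma_i. -/
open Polynomial Finset

lemma keyone (m : ℕ) :
    (1 : ℝ[X]) = ∑ j ∈ Finset.range (m + 1),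
      (X : ℝ[X]) ^ j * (1 - X) ^ (m - j) * (m.choose j : ℝ[X]) := by
  calc (1 : ℝ[X]) = (X + (1 - X)) ^ m := by ring
    _ = _ := add_pow _ _ _

lemma stmt7_second (n : ℕ) (γ : ℕ → ℝ) :
    (∑ i ∈ Finset.range (n / 2 + 1), C (γ i) * X ^ (2 * i)) =
      ∑ k ∈ Finset.range (n + 1), (∑ i ∈ Finset.range (k / 2 + 1),
        ((n - 2 * i).choose (k - 2 * i) : ℝ[X]) * C (γ i)) * X ^ k * (1 - X) ^ (n - k) := by
  set f : ℕ → ℕ → ℝ[X] := fun k i =>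
    ((n - 2 * i).choose (k - 2 * i) : ℝ[X]) * C (γ i) * X ^ k * (1 - X) ^ (n - k) with hf
  have step1 : ∑ k ∈ Finset.range (n + 1), (∑ i ∈ Finset.range (k / 2 + 1),
        ((n - 2 * i).choose (k - 2 * i) : ℝ[X]) * C (γ i)) * X ^ k * (1 - X) ^ (n - k)
      = ∑ k ∈ Finset.range (n + 1), ∑ i ∈ Finset.range (n + 1),
        if 2 * i ≤ k then f k i else 0 := by
    refine Finset.sum_congr rfl (fun k hk => ?_)
    rw [Finset.sum_mul, Finset.sum_mul, ← Finset.sum_filter]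
    have hk' : k ≤ n := by simpa [Nat.lt_succ_iff] using hk
    have hset : (Finset.range (n + 1)).filter (fun i => 2 * i ≤ k)
        = Finset.range (k / 2 + 1) := by
      ext i; simp only [Finset.mem_filter, Finset.mem_range]; omega
    rw [hset]
  rw [step1, Finset.sum_comm]
  have step2 : ∀ i, ∑ k ∈ Finset.range (n + 1), (if 2 * i ≤ k then f k i else 0)
      = if 2 * i ≤ n then C (γ i) * X ^ (2 * i) else 0 := by
    intro i
    rw [← Finset.sum_filter]
    by_cases h : 2 * i ≤ n
    · have hset : (Finset.range (n + 1)).filter (fun k => 2 * i ≤ k)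
          = Finset.Ico (2 * i) (n + 1) := by
        ext k; simp only [Finset.mem_filter, Finset.mem_range, Finset.mem_Ico]; omega
      rw [hset, Finset.sum_Ico_eq_sum_range, if_pos h]
      have hb : n + 1 - 2 * i = (n - 2 * i) + 1 := by omega
      rw [hb]
      have : ∀ j ∈ Finset.range ((n - 2 * i) + 1), f (2 * i + j) i
          = C (γ i) * X ^ (2 * i) *
            ((X : ℝ[X]) ^ j * (1 - X) ^ ((n - 2 * i) - j) * ((n - 2 * i).choose j : ℝ[X])) := by
        intro j hj
        have h1 : 2 * i + j - 2 * i = j := by omega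
        have h2 : n - (2 * i + j) = (n - 2 * i) - j := by omega
        rw [hf]
        simp only [h1, h2, pow_add]
        ring
      rw [Finset.sum_congr rfl this, ← Finset.mul_sum, ← keyone, mul_one]
    · have hset : (Finset.range (n + 1)).filter (fun k => 2 * i ≤ k) = ∅ := by
        ext k; simp only [Finset.mem_filter, Finset.mem_range, Finset.notMem_empty,
          iff_false, not_and]; omega
      rw [hset, Finset.sum_empty, if_neg h]
  rw [Finset.sum_congr rfl (fun i _ => step2 i), ← Finset.sum_filter]
  have hset : (Finset.range (n + 1)).filter (fun i => 2 * i ≤ n)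
      = Finset.range (n / 2 + 1) := by
    ext i; simp only [Finset.mem_filter, Finset.mem_range]; omega
  rw [hset]

theorem stmt7 (n : ℕ) (γ : ℕ → ℝ) (ξ : ℕ → ℝ)
    (hξ : ∀ k, ξ k = ∑ i ∈ Finset.range (k / 2 + 1),
      ((n - 2 * i).choose (k - 2 * i) : ℝ) * γ i) :
    (∑ i ∈ Finset.range (n / 2 + 1), C (γ i) * X ^ (2 * i)) =
      (∑ k ∈ Finset.range (n + 1), C (ξ k) * (-X) ^ k * (1 + X) ^ (n - k)) ∧
    (∑ i ∈ Finset.range (n / 2 + 1), C (γ i) * X ^ (2 * i)) =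
      (∑ k ∈ Finset.range (n + 1), C (ξ k) * X ^ k * (1 - X) ^ (n - k)) := by
  have hC : ∀ k, C (ξ k) = ∑ i ∈ Finset.range (k / 2 + 1),
      ((n - 2 * i).choose (k - 2 * i) : ℝ[X]) * C (γ i) := by
    intro k
    rw [hξ k, map_sum]
    exact Finset.sum_congr rfl (fun i _ => by rw [C_mul]; norm_cast
    )
  have h2 : (∑ i ∈ Finset.range (n / 2 + 1), C (γ i) * X ^ (2 * i)) =
      (∑ k ∈ Finset.range (n + 1), C (ξ k) * X ^ k * (1 - X) ^ (n - k)) := by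
    rw [stmt7_second n γ]
    exact Finset.sum_congr rfl (fun k _ => by rw [hC k])
  refine ⟨?_, h2⟩
  have h3 := congrArg (aeval (-X : ℝ[X])) h2
  simp only [map_sum, map_mul, map_pow, aeval_C, aeval_X, map_sub, map_add, map_one,
    sub_neg_eq_add] at h3
  have h4 : ∀ i : ℕ, (-X : ℝ[X]) ^ (2 * i) = X ^ (2 * i) := by
    intro i
    rw [pow_mul, pow_mul, neg_pow, neg_one_sq, one_mul]
  simp only [h4] at h3
  exact h3
end

section
/- For all nonnegative integers n, sum_{k=0}^n (1/(n+1)) binom(n+1,k+1) binom(n+1,k) x^k = sum_{k=0}^{floor(n/2)} C_k binom(n,2k) x^k (1+x)^{n-2k}, where C_k = binom(2k,k)/(k+1) is the k-th Catalan number. -/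
open Polynomial Finset

/-! Compare coefficients of `X ^ j`. The `k`-th summand on the right contributes
`C_k * (n choose 2k) * (n - 2k choose j - k)`; both this and
`(n+1 choose j) * (n+1-j choose k+1) * (j choose k) / (n+1)` equal the multinomial coefficient
`n! / (k! (k+1)! (j-k)! (n-j-k)!)`. Summing the latter over `k` by Vandermonde's identity gives
the Narayana number `(n+1 choose j+1) * (n+1 choose j) / (n+1)`. -/

namespace Nat

theorem cast_catalan_eq_factorial (k : ℕ) :
    (catalan k : ℚ) = (2 * k)! / (k ! * (k + 1)!) := by
  have h : ((k + 1) * catalan k : ℕ) = (k + k).choose k := by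
    rw [succ_mul_catalan_eq_centralBinom, centralBinom_eq_two_mul_choose, two_mul]
  qify at h
  rw [cast_add_choose, eq_div_iff (by positivity)] at h
  rw [two_mul, factorial_succ, eq_div_iff (by positivity), ← h]
  push_cast
  ring

theorem succ_mul_catalan_mul_add_choose (k a b : ℕ) :
    (2 * k + a + b + 1) * catalan k * (2 * k + (a + b)).choose (2 * k) * (a + b).choose a =
      (k + a + (k + b + 1)).choose (k + a) * (k + 1 + b).choose (k + 1) * (k + a).choose k := by
  qify
  simp only [cast_add_choose, cast_catalan_eq_factorial]
  rw [show k + a + (k + b + 1) = 2 * k + (a + b) + 1 by ring, show k + 1 + b = k + b + 1 by ring]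
  simp only [factorial_succ]
  field_simp
  push_cast
  ring

theorem succ_mul_catalan_mul_choose_mul_choose (n j k : ℕ) :
    (n + 1) * catalan k * n.choose (2 * k) * (if k ≤ j then (n - 2 * k).choose (j - k) else 0) =
      (n + 1).choose j * (n + 1 - j).choose (k + 1) * j.choose k := by
  by_cases hkj : k ≤ j
  · rw [if_pos hkj]
    by_cases hjk : j + k ≤ n
    · obtain ⟨a, rfl⟩ := Nat.exists_eq_add_of_le hkj
      obtain ⟨b, rfl⟩ := Nat.exists_eq_add_of_le hjk
      have := succ_mul_catalan_mul_add_choose k a b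
      rw [show k + a + k + b - 2 * k = a + b by omega, show k + a - k = a by omega,
        show k + a + k + b + 1 - (k + a) = k + 1 + b by omega]
      convert this using 4 <;> ring
    · have hlhs : n.choose (2 * k) * (n - 2 * k).choose (j - k) = 0 := by
        rcases le_or_gt (2 * k) n with h | h
        · rw [choose_eq_zero_of_lt (by omega : n - 2 * k < j - k), mul_zero]
        · rw [choose_eq_zero_of_lt h, zero_mul]
      rw [mul_assoc, hlhs, choose_eq_zero_of_lt (by omega : n + 1 - j < k + 1)]
      simp
  · rw [if_neg hkj, choose_eq_zero_of_lt (not_le.mp hkj)]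
    simp

theorem sum_range_succ_choose_succ_mul_choose (m j : ℕ) :
    ∑ k ∈ range (j + 1), m.choose (k + 1) * j.choose k = (m + j).choose (j + 1) := by
  rw [add_choose_eq, Finset.Nat.sum_antidiagonal_succ, choose_succ_self, mul_zero, zero_add,
    Finset.Nat.sum_antidiagonal_eq_sum_range_succ_mk]
  exact sum_congr rfl fun k hk => by rw [choose_symm (mem_range_succ_iff.mp hk)]

theorem sum_range_choose_succ_mul_choose {m j N : ℕ} (hN : min m (j + 1) ≤ N) :
    ∑ k ∈ range N, m.choose (k + 1) * j.choose k = (m + j).choose (j + 1) := by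
  have hvanish : ∀ k ≥ min m (j + 1), m.choose (k + 1) * j.choose k = 0 := fun k hk => by
    rcases min_le_iff.mp hk with h | h
    · rw [choose_eq_zero_of_lt (by omega : m < k + 1), zero_mul]
    · rw [choose_eq_zero_of_lt (by omega : j < k), mul_zero]
  rw [eventually_constant_sum hvanish hN, ← eventually_constant_sum hvanish (min_le_right _ _),
    sum_range_succ_choose_succ_mul_choose]

theorem sum_succ_mul_catalan_mul_choose_mul_choose (n j : ℕ) :
    ∑ k ∈ range (n / 2 + 1), (n + 1) * catalan k * n.choose (2 * k) *
        (if k ≤ j then (n - 2 * k).choose (j - k) else 0) =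
      (n + 1).choose (j + 1) * (n + 1).choose j := by
  simp_rw [succ_mul_catalan_mul_choose_mul_choose, mul_assoc, ← mul_sum]
  rw [sum_range_choose_succ_mul_choose (by omega)]
  rcases le_or_gt j (n + 1) with h | h
  · rw [Nat.sub_add_cancel h, mul_comm]
  · simp [choose_eq_zero_of_lt h]

end Nat

theorem stmt8 (n : ℕ) :
    (∑ k ∈ Finset.range (n + 1),
        C ((1 / ((n : ℚ) + 1)) * ((n + 1).choose (k + 1)) * ((n + 1).choose k)) * X ^ k) =
      ∑ k ∈ Finset.range (n / 2 + 1),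
        C ((catalan k : ℚ) * (n.choose (2 * k))) * X ^ k * (1 + X) ^ (n - 2 * k) := by
  ext j
  have hL : (∑ k ∈ range (n + 1),
      C ((1 / ((n : ℚ) + 1)) * ((n + 1).choose (k + 1)) * ((n + 1).choose k)) * X ^ k).coeff j
      = 1 / ((n : ℚ) + 1) * ((n + 1).choose (j + 1)) * ((n + 1).choose j) := by
    simp only [finsetSum_coeff, coeff_C_mul_X_pow, sum_ite_eq, mem_range]
    split_ifs with h
    · rfl
    · simp [Nat.choose_eq_zero_of_lt (by omega : n + 1 < j + 1)]
  have hR : (∑ k ∈ range (n / 2 + 1),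
      C ((catalan k : ℚ) * (n.choose (2 * k))) * X ^ k * (1 + X) ^ (n - 2 * k)).coeff j
      = ∑ k ∈ range (n / 2 + 1), (catalan k : ℚ) * n.choose (2 * k) *
          (if k ≤ j then ((n - 2 * k).choose (j - k) : ℚ) else 0) := by
    simp only [finsetSum_coeff, mul_right_comm _ (X ^ _), coeff_mul_X_pow', coeff_C_mul,
      coeff_one_add_X_pow, mul_ite, mul_zero]
  have hsum := congrArg (Nat.cast : ℕ → ℚ) (Nat.sum_succ_mul_catalan_mul_choose_mul_choose n j)
  push_cast at hsum
  rw [hL, hR, mul_assoc, ← hsum, mul_sum]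
  exact sum_congr rfl fun k _ => by field_simp
end

section
/- For all nonnegative integers n, sum_{k=0}^n (1/(n+1)) binom(n+1,k+1) binom(n+1,k) x^{2k} (1+x)^{2n-2k} = sum_{k=0}^n C_{k+1} binom(n,k) x^k (1+x)^k, where C_m denotes the m-th Catalan number. -/
open Polynomial Finset

def fcoef (n k : ℕ) : ℚ := 1 / ((n : ℚ) + 1) * ((n + 1).choose (k + 1)) * ((n + 1).choose k)
def gcoef (n k : ℕ) : ℚ := (catalan (k + 1) : ℚ) * (n.choose k)

def shc (c : ℕ → ℚ) : ℕ → ℚ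
  | 0 => 0
  | k + 1 => c k

noncomputable def SL (c : ℕ → ℚ) (m N : ℕ) : ℚ[X] :=
  ∑ k ∈ range N, C (c k) * (X ^ 2) ^ k * ((1 + X) ^ 2) ^ (m - k)

noncomputable def SR (c : ℕ → ℚ) (N : ℕ) : ℚ[X] :=
  ∑ k ∈ range N, C (c k) * (X * (1 + X)) ^ k

noncomputable def LL (n : ℕ) : ℚ[X] := SL (fcoef n) n (n + 1)
noncomputable def RR (n : ℕ) : ℚ[X] := SR (gcoef n) (n + 1)

noncomputable def kap (i j : ℕ) : ℚ :=
  (Nat.factorial (i + j) : ℚ) ^ 2 * ((i : ℚ) + j + 1) ^ 2 * ((i : ℚ) + j + 2) ^ 2 * ((i : ℚ) + j + 3) /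
    ((Nat.factorial i : ℚ) ^ 2 * (Nat.factorial j : ℚ) ^ 2 *
      (((i : ℚ) + 1) ^ 2 * ((i : ℚ) + 2) ^ 2 * ((i : ℚ) + 3) * ((j : ℚ) + 1) ^ 2 * ((j : ℚ) + 2) ^ 2 *
        ((j : ℚ) + 3) * ((i : ℚ) + j + 4) * ((i : ℚ) + j + 5)))

noncomputable def muc (i j : ℕ) : ℚ :=
  (Nat.factorial (i + j) : ℚ) * ((i : ℚ) + j + 1) /
    ((Nat.factorial i : ℚ) * (Nat.factorial j : ℚ) * ((i : ℚ) + 1) * ((j : ℚ) + 1) * ((j : ℚ) + 2))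

lemma fsucc (m : ℕ) : (Nat.factorial (m + 1) : ℚ) = ((m : ℚ) + 1) * Nat.factorial m := by
  rw [Nat.factorial_succ]; push_cast; ring

lemma fcoef_zero {n k : ℕ} (h : n < k) : fcoef n k = 0 := by
  have : (n + 1).choose (k + 1) = 0 := Nat.choose_eq_zero_of_lt (by omega)
  simp [fcoef, this]

lemma gcoef_zero {n k : ℕ} (h : n < k) : gcoef n k = 0 := by
  simp [gcoef, Nat.choose_eq_zero_of_lt h]

lemma shc_zero {c : ℕ → ℚ} {M : ℕ} (h0 : ∀ k, M ≤ k → c k = 0) :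
    ∀ k, M + 1 ≤ k → shc c k = 0
  | 0, hk => rfl
  | k + 1, hk => h0 k (by omega)

lemma fc_fact (n k : ℕ) (h : k ≤ n) :
    fcoef n k = (Nat.factorial (n + 1) : ℚ) * (Nat.factorial (n + 1)) /
      (((n : ℚ) + 1) * (Nat.factorial (k + 1)) * (Nat.factorial (n - k)) *
        (Nat.factorial k) * (Nat.factorial (n - k + 1))) := by
  rw [fcoef, Nat.cast_choose ℚ (show k + 1 ≤ n + 1 by omega),
    Nat.cast_choose ℚ (show k ≤ n + 1 by omega),
    show n + 1 - (k + 1) = n - k by omega, show n + 1 - k = n - k + 1 by omega]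
  have h1 : ((k + 1).factorial : ℚ) ≠ 0 := Nat.cast_ne_zero.mpr (Nat.factorial_ne_zero _)
  have h2 : ((n - k).factorial : ℚ) ≠ 0 := Nat.cast_ne_zero.mpr (Nat.factorial_ne_zero _)
  have h3 : (k.factorial : ℚ) ≠ 0 := Nat.cast_ne_zero.mpr (Nat.factorial_ne_zero _)
  have h4 : ((n - k + 1).factorial : ℚ) ≠ 0 := Nat.cast_ne_zero.mpr (Nat.factorial_ne_zero _)
  have h5 : ((n : ℚ) + 1) ≠ 0 := by positivity
  field_simp

lemma fc_diag (m : ℕ) : fcoef m m = 1 := by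
  have h1 : (m + 1).choose (m + 1) = 1 := Nat.choose_self _
  have h2 : (m + 1).choose m = m + 1 := Nat.choose_succ_self_right m
  have h5 : ((m : ℚ) + 1) ≠ 0 := by positivity
  rw [fcoef, h1, h2]
  push_cast
  field_simp

lemma fc_bot (m : ℕ) : fcoef m 0 = 1 := by
  have h5 : ((m : ℚ) + 1) ≠ 0 := by positivity
  rw [fcoef, Nat.choose_one_right, Nat.choose_zero_right]
  push_cast
  field_simp

lemma fc_one (m : ℕ) : fcoef m 1 = (m : ℚ) * ((m : ℚ) + 1) / 2 := by
  have h5 : ((m : ℚ) + 1) ≠ 0 := by positivity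
  have h2 : (m + 1).choose 2 = (m + 1) * m / 2 := by
    rw [Nat.choose_two_right]; simp
  have hdvd : 2 ∣ (m + 1) * m := by
    rcases Nat.even_or_odd m with he | ho
    · exact Dvd.dvd.mul_left he.two_dvd _
    · exact Dvd.dvd.mul_right (ho.add_one.two_dvd) _
  have h2' : ((m + 1).choose 2 : ℚ) = ((m : ℚ) + 1) * m / 2 := by
    rw [h2, Nat.cast_div hdvd (by norm_num)]
    push_cast; ring
  rw [fcoef, Nat.choose_one_right, h2']
  push_cast
  field_simp

lemma fc_subdiag (m : ℕ) : fcoef (m + 1) m = ((m : ℚ) + 1) * ((m : ℚ) + 2) / 2 := by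
  rw [fc_fact _ _ (by omega), show m + 1 - m = 1 by omega]
  simp only [fsucc, Nat.factorial_zero, Nat.cast_one]
  push_cast
  rw [div_eq_iff (by positivity)]
  ring

lemma cat_ratio (m : ℕ) :
    ((m : ℚ) + 3) * (catalan (m + 2) : ℚ) = 2 * (2 * (m : ℚ) + 3) * (catalan (m + 1) : ℚ) := by
  have q1 : ((m : ℚ) + 3) * (catalan (m + 2) : ℚ) = (Nat.centralBinom (m + 2) : ℚ) := by
    exact_mod_cast congrArg (Nat.cast : ℕ → ℚ) (succ_mul_catalan_eq_centralBinom (m + 2))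
  have q2 : ((m : ℚ) + 2) * (Nat.centralBinom (m + 2) : ℚ)
      = 2 * (2 * (m : ℚ) + 3) * (Nat.centralBinom (m + 1) : ℚ) := by
    exact_mod_cast congrArg (Nat.cast : ℕ → ℚ) (Nat.succ_mul_centralBinom_succ (m + 1))
  have q3 : ((m : ℚ) + 2) * (catalan (m + 1) : ℚ) = (Nat.centralBinom (m + 1) : ℚ) := by
    exact_mod_cast congrArg (Nat.cast : ℕ → ℚ) (succ_mul_catalan_eq_centralBinom (m + 1))
  apply mul_left_cancel₀ (show ((m : ℚ) + 2) ≠ 0 by positivity)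
  linear_combination ((m : ℚ) + 2) * q1 + q2 - 2 * (2 * (m : ℚ) + 3) * q3

set_option maxHeartbeats 1000000 in
lemma eL1 (i j : ℕ) : fcoef (i + j + 2 + 2) (i + 2)
    = ((i : ℚ) + j + 3) * ((i : ℚ) + j + 4) ^ 3 * ((i : ℚ) + j + 5) ^ 2 * kap i j := by
  rw [fc_fact _ _ (by omega), show i + j + 2 + 2 - (i + 2) = j + 2 by omega, kap]
  simp only [fsucc, Nat.factorial_zero, Nat.cast_one]
  push_cast
  rw [← mul_div_assoc, div_eq_div_iff (by positivity) (by positivity)]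
  ring

set_option maxHeartbeats 1000000 in
lemma eL2 (i j : ℕ) : fcoef (i + j + 2 + 1) (i + 1)
    = ((i : ℚ) + j + 4) ^ 2 * ((i : ℚ) + 2) * ((i : ℚ) + 3) * ((i : ℚ) + j + 3) * ((i : ℚ) + j + 5)
      * kap i j := by
  rw [fc_fact _ _ (by omega), show i + j + 2 + 1 - (i + 1) = j + 2 by omega, kap]
  simp only [fsucc, Nat.factorial_zero, Nat.cast_one]
  push_cast
  rw [← mul_div_assoc, div_eq_div_iff (by positivity) (by positivity)]
  ring

set_option maxHeartbeats 1000000 in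
lemma eL3 (i j : ℕ) : fcoef (i + j + 2 + 1) (i + 2)
    = ((i : ℚ) + j + 4) ^ 2 * ((j : ℚ) + 2) * ((j : ℚ) + 3) * ((i : ℚ) + j + 3) * ((i : ℚ) + j + 5)
      * kap i j := by
  rw [fc_fact _ _ (by omega), show i + j + 2 + 1 - (i + 2) = j + 1 by omega, kap]
  simp only [fsucc, Nat.factorial_zero, Nat.cast_one]
  push_cast
  rw [← mul_div_assoc, div_eq_div_iff (by positivity) (by positivity)]
  ring

set_option maxHeartbeats 1000000 in
lemma eL4 (i j : ℕ) : fcoef (i + j + 2) (i + 2)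
    = ((j : ℚ) + 1) * ((j : ℚ) + 2) ^ 2 * ((j : ℚ) + 3) * ((i : ℚ) + j + 4) * ((i : ℚ) + j + 5)
      * kap i j := by
  rw [fc_fact _ _ (by omega), show i + j + 2 - (i + 2) = j by omega, kap]
  simp only [fsucc, Nat.factorial_zero, Nat.cast_one]
  push_cast
  rw [← mul_div_assoc, div_eq_div_iff (by positivity) (by positivity)]
  ring

set_option maxHeartbeats 1000000 in
lemma eL5 (i j : ℕ) : fcoef (i + j + 2) i
    = ((i : ℚ) + 1) * ((i : ℚ) + 2) ^ 2 * ((i : ℚ) + 3) * ((i : ℚ) + j + 4) * ((i : ℚ) + j + 5)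
      * kap i j := by
  rw [fc_fact _ _ (by omega), show i + j + 2 - i = j + 2 by omega, kap]
  simp only [fsucc, Nat.factorial_zero, Nat.cast_one]
  push_cast
  rw [← mul_div_assoc, div_eq_div_iff (by positivity) (by positivity)]
  ring

set_option maxHeartbeats 1000000 in
lemma eL6 (i j : ℕ) : fcoef (i + j + 2) (i + 1)
    = ((i : ℚ) + 2) * ((i : ℚ) + 3) * ((j : ℚ) + 2) * ((j : ℚ) + 3) * ((i : ℚ) + j + 4)
      * ((i : ℚ) + j + 5) * kap i j := by
  rw [fc_fact _ _ (by omega), show i + j + 2 - (i + 1) = j + 1 by omega, kap]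
  simp only [fsucc, Nat.factorial_zero, Nat.cast_one]
  push_cast
  rw [← mul_div_assoc, div_eq_div_iff (by positivity) (by positivity)]
  ring

set_option maxHeartbeats 1000000 in
lemma cR1 (i j : ℕ) : ((i + j + 1 + 2).choose (i + 1) : ℚ)
    = ((i : ℚ) + j + 2) * ((i : ℚ) + j + 3) * muc i j := by
  rw [Nat.cast_choose ℚ (by omega), show i + j + 1 + 2 - (i + 1) = j + 2 by omega, muc]
  simp only [fsucc, Nat.factorial_zero, Nat.cast_one]
  push_cast
  rw [← mul_div_assoc, div_eq_div_iff (by positivity) (by positivity)]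
  ring

set_option maxHeartbeats 1000000 in
lemma cR2 (i j : ℕ) : ((i + j + 1).choose (i + 1) : ℚ)
    = ((j : ℚ) + 1) * ((j : ℚ) + 2) * muc i j := by
  rw [Nat.cast_choose ℚ (by omega), show i + j + 1 - (i + 1) = j by omega, muc]
  simp only [fsucc, Nat.factorial_zero, Nat.cast_one]
  push_cast
  rw [← mul_div_assoc, div_eq_div_iff (by positivity) (by positivity)]
  ring

set_option maxHeartbeats 1000000 in
lemma cR3 (i j : ℕ) : ((i + j + 1).choose i : ℚ)
    = ((i : ℚ) + 1) * ((j : ℚ) + 2) * muc i j := by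
  rw [Nat.cast_choose ℚ (by omega), show i + j + 1 - i = j + 1 by omega, muc]
  simp only [fsucc, Nat.factorial_zero, Nat.cast_one]
  push_cast
  rw [← mul_div_assoc, div_eq_div_iff (by positivity) (by positivity)]
  ring

set_option maxHeartbeats 1000000 in
lemma cR4 (i j : ℕ) : ((i + j + 1 + 1).choose (i + 1) : ℚ)
    = ((i : ℚ) + j + 2) * ((j : ℚ) + 2) * muc i j := by
  rw [Nat.cast_choose ℚ (by omega), show i + j + 1 + 1 - (i + 1) = j + 1 by omega, muc]
  simp only [fsucc, Nat.factorial_zero, Nat.cast_one]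
  push_cast
  rw [← mul_div_assoc, div_eq_div_iff (by positivity) (by positivity)]
  ring

set_option maxHeartbeats 1000000 in
lemma cR5 (i j : ℕ) : ((i + j + 1 + 1).choose i : ℚ)
    = ((i : ℚ) + j + 2) * ((i : ℚ) + 1) * muc i j := by
  rw [Nat.cast_choose ℚ (by omega), show i + j + 1 + 1 - i = j + 2 by omega, muc]
  simp only [fsucc, Nat.factorial_zero, Nat.cast_one]
  push_cast
  rw [← mul_div_assoc, div_eq_div_iff (by positivity) (by positivity)]
  ring

lemma gc_bot (m : ℕ) : gcoef m 0 = 1 := by simp [gcoef, catalan_one]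

set_option maxHeartbeats 1000000 in
lemma pointL (n k : ℕ) :
    ((n : ℚ) + 4) * fcoef (n + 2) k
      = (2 * (n : ℚ) + 5) * (shc (fcoef (n + 1)) k + fcoef (n + 1) k)
        - ((n : ℚ) + 1) * (fcoef n k + shc (shc (fcoef n)) k - 2 * shc (fcoef n) k) := by
  match k with
  | 0 =>
    simp only [shc]
    rw [fc_bot, fc_bot, fc_bot]
    ring
  | 1 =>
    simp only [show ∀ c : ℕ → ℚ, shc c 1 = c 0 from fun _ => rfl, shc]
    rw [fc_one, fc_one, fc_one, fc_bot, fc_bot]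
    push_cast
    ring
  | (i + 2) =>
    simp only [show ∀ c : ℕ → ℚ, shc c (i + 2) = c (i + 1) from fun _ => rfl,
      show ∀ c : ℕ → ℚ, shc c (i + 1) = c i from fun _ => rfl]
    rcases Nat.lt_or_ge n i with h | h
    · rw [fcoef_zero (by omega), fcoef_zero (by omega), fcoef_zero (by omega),
        fcoef_zero (by omega), fcoef_zero (by omega), fcoef_zero (by omega)]
      ring
    · rcases (show n = i ∨ n = i + 1 ∨ i + 2 ≤ n by omega) with rfl | h1 | h1
      · rw [fcoef_zero (show n < n + 2 by omega), fcoef_zero (show n < n + 1 by omega),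
          fcoef_zero (show n + 1 < n + 2 by omega),
          fc_diag (n + 2), fc_diag (n + 1), fc_diag n]
        ring
      · subst h1
        rw [show i + 1 + 2 = (i + 2) + 1 by omega, fc_subdiag (i + 2),
          show i + 1 + 1 = (i + 1) + 1 from rfl, fc_subdiag (i + 1),
          fcoef_zero (show i + 1 < i + 2 by omega),
          fc_subdiag i, fc_diag (i + 1),
          show i + 1 + 1 = i + 2 from rfl, fc_diag (i + 2)]
        push_cast
        ring
      · obtain ⟨j, rfl⟩ : ∃ j, n = i + j + 2 := ⟨n - i - 2, by omega⟩
        rw [eL1, eL2, eL3, eL4, eL5, eL6]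
        push_cast
        ring

set_option maxHeartbeats 1000000 in
lemma pointR (n k : ℕ) :
    ((n : ℚ) + 4) * gcoef (n + 2) k
      = (2 * (n : ℚ) + 5) * (gcoef (n + 1) k + 2 * shc (gcoef (n + 1)) k)
        - ((n : ℚ) + 1) * (gcoef n k + 4 * shc (gcoef n) k) := by
  match k with
  | 0 =>
    simp only [shc]
    rw [gc_bot, gc_bot, gc_bot]
    ring
  | (i + 1) =>
    simp only [show ∀ c : ℕ → ℚ, shc c (i + 1) = c i from fun _ => rfl]
    rcases Nat.lt_or_ge (n + 1) i with h | h
    · rw [gcoef_zero (by omega), gcoef_zero (by omega), gcoef_zero (by omega),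
        gcoef_zero (by omega), gcoef_zero (by omega)]
      ring
    · rcases (show i = n + 1 ∨ n = i ∨ i + 1 ≤ n by omega) with rfl | rfl | h1
      · -- i = n + 1
        have t1 : gcoef (n + 2) (n + 1 + 1) = (catalan (n + 3) : ℚ) := by
          simp [gcoef, show n + 1 + 1 = n + 2 from rfl, show n + 2 + 1 = n + 3 from rfl]
        have t2 : gcoef (n + 1) (n + 1 + 1) = 0 := gcoef_zero (by omega)
        have t3 : gcoef (n + 1) (n + 1) = (catalan (n + 2) : ℚ) := by
          simp [gcoef, show n + 1 + 1 = n + 2 from rfl]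
        have t4 : gcoef n (n + 1 + 1) = 0 := gcoef_zero (by omega)
        have t5 : gcoef n (n + 1) = 0 := gcoef_zero (by omega)
        rw [t1, t2, t3, t4, t5]
        have hc := cat_ratio (n + 1)
        push_cast at hc
        rw [show n + 1 + 2 = n + 3 from rfl, show n + 1 + 1 = n + 2 from rfl] at hc
        linear_combination hc
      · -- n = i
        have t1 : gcoef (n + 2) (n + 1) = (catalan (n + 2) : ℚ) * ((n : ℚ) + 2) := by
          simp [gcoef, show n + 1 + 1 = n + 2 from rfl, Nat.choose_succ_self_right]
        have t2 : gcoef (n + 1) (n + 1) = (catalan (n + 2) : ℚ) := by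
          simp [gcoef, show n + 1 + 1 = n + 2 from rfl]
        have t3 : gcoef (n + 1) n = (catalan (n + 1) : ℚ) * ((n : ℚ) + 1) := by
          simp [gcoef, Nat.choose_succ_self_right]
        have t4 : gcoef n (n + 1) = 0 := gcoef_zero (by omega)
        have t5 : gcoef n n = (catalan (n + 1) : ℚ) := by simp [gcoef]
        rw [t1, t2, t3, t4, t5]
        linear_combination ((n : ℚ) + 1) * cat_ratio n
      · obtain ⟨j, rfl⟩ : ∃ j, n = i + j + 1 := ⟨n - i - 1, by omega⟩
        simp only [gcoef, show i + 1 + 1 = i + 2 from rfl]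
        rw [cR1, cR2, cR3, cR4, cR5]
        apply mul_left_cancel₀ (show ((i : ℚ) + 3) ≠ 0 by positivity)
        push_cast
        linear_combination (muc i j * (((i : ℚ) + (j : ℚ) + 5) * ((i : ℚ) + (j : ℚ) + 2) * ((i : ℚ) + (j : ℚ) + 3)
          + ((i : ℚ) + (j : ℚ) + 2) * ((j : ℚ) + 1) * ((j : ℚ) + 2)
          - (2 * (i : ℚ) + 2 * (j : ℚ) + 7) * ((i : ℚ) + (j : ℚ) + 2) * ((j : ℚ) + 2))) * cat_ratio i

lemma SL_pad (c : ℕ → ℚ) (m : ℕ) {N N' : ℕ} (hNN : N ≤ N')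
    (h : ∀ k, N ≤ k → c k = 0) : SL c m N = SL c m N' := by
  refine Finset.sum_subset (Finset.range_subset_range.mpr hNN) fun k _ hk => ?_
  rw [h k (by simpa using hk)]
  simp

lemma SL_shift (c : ℕ → ℚ) (m N : ℕ) :
    X ^ 2 * SL c m N = SL (shc c) (m + 1) (N + 1) := by
  rw [SL, SL, Finset.mul_sum, Finset.sum_range_succ']
  simp only [shc, Nat.add_sub_add_right, map_zero, zero_mul, add_zero, pow_zero, mul_one]
  exact Finset.sum_congr rfl fun i _ => by ring

lemma SL_up (c : ℕ → ℚ) (m N : ℕ) (h : N ≤ m + 1) :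
    (1 + X) ^ 2 * SL c m N = SL c (m + 1) N := by
  rw [SL, SL, Finset.mul_sum]
  refine Finset.sum_congr rfl fun k hk => ?_
  have hk' : k < N := Finset.mem_range.mp hk
  rw [show m + 1 - k = (m - k) + 1 by omega]
  ring

lemma SR_pad (c : ℕ → ℚ) {N N' : ℕ} (hNN : N ≤ N')
    (h : ∀ k, N ≤ k → c k = 0) : SR c N = SR c N' := by
  refine Finset.sum_subset (Finset.range_subset_range.mpr hNN) fun k _ hk => ?_
  rw [h k (by simpa using hk)]
  simp

lemma SR_shift (c : ℕ → ℚ) (N : ℕ) :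
    X * (1 + X) * SR c N = SR (shc c) (N + 1) := by
  rw [SR, SR, Finset.mul_sum, Finset.sum_range_succ']
  simp only [shc, map_zero, zero_mul, add_zero, pow_zero]
  exact Finset.sum_congr rfl fun i _ => by ring

set_option maxHeartbeats 1000000 in
lemma Lrec (n : ℕ) :
    C ((n : ℚ) + 4) * LL (n + 2)
      = C (2 * (n : ℚ) + 5) * (X ^ 2 + (1 + X) ^ 2) * LL (n + 1)
        - C ((n : ℚ) + 1) * ((1 + X) ^ 2 - X ^ 2) ^ 2 * LL n := by
  have padf : ∀ m : ℕ, ∀ k, m + 1 ≤ k → fcoef m k = 0 := fun m k hk => fcoef_zero (by omega)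
  have E2 : X ^ 2 * LL (n + 1) = SL (shc (fcoef (n + 1))) (n + 2) (n + 3) := SL_shift _ _ _
  have E3 : (1 + X) ^ 2 * LL (n + 1) = SL (fcoef (n + 1)) (n + 2) (n + 3) := by
    rw [show LL (n + 1) = SL (fcoef (n + 1)) (n + 1) (n + 2) from rfl, SL_up _ _ _ (by omega)]
    exact SL_pad _ _ (by omega) (padf (n + 1))
  have E4 : X ^ 2 * (X ^ 2 * LL n) = SL (shc (shc (fcoef n))) (n + 2) (n + 3) := by
    rw [show LL n = SL (fcoef n) n (n + 1) from rfl, SL_shift, SL_shift]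
  have E5 : X ^ 2 * ((1 + X) ^ 2 * LL n) = SL (shc (fcoef n)) (n + 2) (n + 3) := by
    rw [show LL n = SL (fcoef n) n (n + 1) from rfl, SL_up _ _ _ (by omega), SL_shift]
    exact SL_pad _ _ (by omega) (shc_zero (padf n))
  have E6 : (1 + X) ^ 2 * ((1 + X) ^ 2 * LL n) = SL (fcoef n) (n + 2) (n + 3) := by
    rw [show LL n = SL (fcoef n) n (n + 1) from rfl, SL_up _ _ _ (by omega),
      SL_up _ _ _ (by omega)]
    exact SL_pad _ _ (by omega) (padf n)
  have KEY : C ((n : ℚ) + 4) * SL (fcoef (n + 2)) (n + 2) (n + 3)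
      = C (2 * (n : ℚ) + 5) * (SL (shc (fcoef (n + 1))) (n + 2) (n + 3)
            + SL (fcoef (n + 1)) (n + 2) (n + 3))
        - C ((n : ℚ) + 1) * (SL (fcoef n) (n + 2) (n + 3)
            + SL (shc (shc (fcoef n))) (n + 2) (n + 3)
            - 2 * SL (shc (fcoef n)) (n + 2) (n + 3)) := by
    simp only [SL]
    simp only [Finset.mul_sum, ← Finset.sum_add_distrib, ← Finset.sum_sub_distrib]
    refine Finset.sum_congr rfl fun k hk => ?_
    have h' : C (((n : ℚ) + 4) * fcoef (n + 2) k)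
        = C ((2 * (n : ℚ) + 5) * (shc (fcoef (n + 1)) k + fcoef (n + 1) k)
            - ((n : ℚ) + 1) * (fcoef n k + shc (shc (fcoef n)) k - 2 * shc (fcoef n) k)) := by
      rw [pointL n k]
    simp only [map_add, map_sub, map_mul, map_ofNat] at h' ⊢
    linear_combination ((X ^ 2 : ℚ[X]) ^ k * ((1 + X) ^ 2) ^ (n + 2 - k)) * h'
  calc C ((n : ℚ) + 4) * LL (n + 2)
      = C ((n : ℚ) + 4) * SL (fcoef (n + 2)) (n + 2) (n + 3) := rfl
    _ = C (2 * (n : ℚ) + 5) * (SL (shc (fcoef (n + 1))) (n + 2) (n + 3)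
            + SL (fcoef (n + 1)) (n + 2) (n + 3))
        - C ((n : ℚ) + 1) * (SL (fcoef n) (n + 2) (n + 3)
            + SL (shc (shc (fcoef n))) (n + 2) (n + 3)
            - 2 * SL (shc (fcoef n)) (n + 2) (n + 3)) := KEY
    _ = C (2 * (n : ℚ) + 5) * (X ^ 2 + (1 + X) ^ 2) * LL (n + 1)
        - C ((n : ℚ) + 1) * ((1 + X) ^ 2 - X ^ 2) ^ 2 * LL n := by
        rw [← E2, ← E3, ← E4, ← E5, ← E6]; ring

set_option maxHeartbeats 1000000 in
lemma Rrec (n : ℕ) :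
    C ((n : ℚ) + 4) * RR (n + 2)
      = C (2 * (n : ℚ) + 5) * (X ^ 2 + (1 + X) ^ 2) * RR (n + 1)
        - C ((n : ℚ) + 1) * ((1 + X) ^ 2 - X ^ 2) ^ 2 * RR n := by
  have padg : ∀ m : ℕ, ∀ k, m + 1 ≤ k → gcoef m k = 0 := fun m k hk => gcoef_zero (by omega)
  have F2 : X * (1 + X) * RR (n + 1) = SR (shc (gcoef (n + 1))) (n + 3) := SR_shift _ _
  have F3 : RR (n + 1) = SR (gcoef (n + 1)) (n + 3) := SR_pad _ (by omega) (padg (n + 1))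
  have F4 : X * (1 + X) * RR n = SR (shc (gcoef n)) (n + 3) := by
    rw [show RR n = SR (gcoef n) (n + 1) from rfl, SR_shift]
    exact SR_pad _ (by omega) (shc_zero (padg n))
  have F5 : RR n = SR (gcoef n) (n + 3) := SR_pad _ (by omega) (padg n)
  have KEY : C ((n : ℚ) + 4) * SR (gcoef (n + 2)) (n + 3)
      = C (2 * (n : ℚ) + 5) * (SR (gcoef (n + 1)) (n + 3) + 2 * SR (shc (gcoef (n + 1))) (n + 3))
        - C ((n : ℚ) + 1) * (SR (gcoef n) (n + 3) + 4 * SR (shc (gcoef n)) (n + 3)) := by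
    simp only [SR]
    simp only [Finset.mul_sum, ← Finset.sum_add_distrib, ← Finset.sum_sub_distrib]
    refine Finset.sum_congr rfl fun k hk => ?_
    have h' : C (((n : ℚ) + 4) * gcoef (n + 2) k)
        = C ((2 * (n : ℚ) + 5) * (gcoef (n + 1) k + 2 * shc (gcoef (n + 1)) k)
            - ((n : ℚ) + 1) * (gcoef n k + 4 * shc (gcoef n) k)) := by
      rw [pointR n k]
    simp only [map_add, map_sub, map_mul, map_ofNat] at h' ⊢
    linear_combination ((X * (1 + X) : ℚ[X]) ^ k) * h'
  calc C ((n : ℚ) + 4) * RR (n + 2)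
      = C ((n : ℚ) + 4) * SR (gcoef (n + 2)) (n + 3) := rfl
    _ = C (2 * (n : ℚ) + 5) * (SR (gcoef (n + 1)) (n + 3) + 2 * SR (shc (gcoef (n + 1))) (n + 3))
        - C ((n : ℚ) + 1) * (SR (gcoef n) (n + 3) + 4 * SR (shc (gcoef n)) (n + 3)) := KEY
    _ = C (2 * (n : ℚ) + 5) * (X ^ 2 + (1 + X) ^ 2) * RR (n + 1)
        - C ((n : ℚ) + 1) * ((1 + X) ^ 2 - X ^ 2) ^ 2 * RR n := by
        rw [← F2, ← F3, ← F4, ← F5]; ring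

lemma base0 : LL 0 = RR 0 := by
  rw [LL, RR, SL, SR]
  simp [fc_bot, gc_bot]

lemma base1 : LL 1 = RR 1 := by
  rw [LL, RR, SL, SR]
  simp only [Finset.sum_range_succ, Finset.sum_range_zero]
  rw [fc_bot, fc_diag, gc_bot, show gcoef 1 1 = 2 by simp [gcoef, catalan_two]]
  simp only [map_ofNat, map_one]
  ring

lemma mainLR (n : ℕ) : LL n = RR n := by
  have H : ∀ m, LL m = RR m ∧ LL (m + 1) = RR (m + 1) := by
    intro m
    induction m with
    | zero => exact ⟨base0, base1⟩
    | succ p ih =>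
      refine ⟨ih.2, ?_⟩
      have hL := Lrec p
      rw [ih.1, ih.2, ← Rrec p] at hL
      exact mul_left_cancel₀ (Polynomial.C_ne_zero.mpr (show ((p : ℚ) + 4) ≠ 0 by positivity)) hL
  exact (H n).1

theorem stmt9 (n : ℕ) :
    (∑ k ∈ Finset.range (n + 1),
        C ((1 / ((n : ℚ) + 1)) * ((n + 1).choose (k + 1)) * ((n + 1).choose k)) *
          X ^ (2 * k) * (1 + X) ^ (2 * n - 2 * k)) =
      ∑ k ∈ Finset.range (n + 1),
        C ((catalan (k + 1) : ℚ) * (n.choose k)) * X ^ k * (1 + X) ^ k := by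
  have hL : (∑ k ∈ Finset.range (n + 1),
      C ((1 / ((n : ℚ) + 1)) * ((n + 1).choose (k + 1)) * ((n + 1).choose k)) *
        X ^ (2 * k) * (1 + X) ^ (2 * n - 2 * k)) = LL n := by
    rw [LL, SL]
    refine Finset.sum_congr rfl fun k hk => ?_
    have hk' : k ≤ n := by simpa [Nat.lt_succ] using hk
    rw [pow_mul, show 2 * n - 2 * k = 2 * (n - k) by omega, pow_mul]
    rfl
  have hR : (∑ k ∈ Finset.range (n + 1),
      C ((catalan (k + 1) : ℚ) * (n.choose k)) * X ^ k * (1 + X) ^ k) = RR n := by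
    rw [RR, SR]
    refine Finset.sum_congr rfl fun k hk => ?_
    rw [mul_pow, mul_assoc]
    rfl
  rw [hL, hR]
  exact mainLR n
end

section
/- For all nonnegative integers n, sum_{k=0}^n binom(n,k)^2 x^k = sum_{k=0}^{floor(n/2)} binom(n,2k) binom(2k,k) x^k (1+x)^{n-2k}. -/
open Polynomial Finset

private lemma termA (n m k : ℕ) (h2 : 2*k ≤ n) (hk : k ≤ m) :
    n.choose (2*k) * (2*k).choose k * (n-2*k).choose (m-k)
      = n.choose m * (m.choose k * (n-m).choose k) := by
  by_cases hmn : m + k ≤ n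
  · have h1 : (2*k).choose k * (k.factorial * k.factorial) = (2*k).factorial := by
      have h := Nat.choose_mul_factorial_mul_factorial (show k ≤ 2*k by omega)
      rw [show 2*k - k = k by omega] at h
      rw [← h]; ring
    have h2' : (n-2*k).choose (m-k) * ((m-k).factorial * (n-m-k).factorial)
        = (n-2*k).factorial := by
      have h := Nat.choose_mul_factorial_mul_factorial (show m-k ≤ n-2*k by omega)
      rw [show n-2*k-(m-k) = n-m-k by omega] at h
      rw [← h]; ring
    have h3 : n.choose (2*k) * ((2*k).factorial * (n-2*k).factorial) = n.factorial := by
      have h := Nat.choose_mul_factorial_mul_factorial h2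
      rw [← h]; ring
    have h4 : m.choose k * (k.factorial * (m-k).factorial) = m.factorial := by
      have h := Nat.choose_mul_factorial_mul_factorial hk
      rw [← h]; ring
    have h5 : (n-m).choose k * (k.factorial * (n-m-k).factorial) = (n-m).factorial := by
      have h := Nat.choose_mul_factorial_mul_factorial (show k ≤ n-m by omega)
      rw [show n-m-k = n-m-k by rfl] at h
      rw [← h]; ring
    have h6 : n.choose m * (m.factorial * (n-m).factorial) = n.factorial := by
      have h := Nat.choose_mul_factorial_mul_factorial (show m ≤ n by omega)
      rw [← h]; ring
    have Dpos : 0 < k.factorial * k.factorial * ((m-k).factorial * (n-m-k).factorial) :=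
      by positivity
    apply Nat.eq_of_mul_eq_mul_right Dpos
    have L : n.choose (2*k) * (2*k).choose k * (n-2*k).choose (m-k)
        * (k.factorial * k.factorial * ((m-k).factorial * (n-m-k).factorial))
        = n.factorial := by
      rw [← h3, ← h1, ← h2']; ring
    have R : n.choose m * (m.choose k * (n-m).choose k)
        * (k.factorial * k.factorial * ((m-k).factorial * (n-m-k).factorial))
        = n.factorial := by
      rw [← h6, ← h4, ← h5]; ring
    rw [L, R]
  · rw [Nat.choose_eq_zero_of_lt (show n - 2*k < m - k by omega)]
    by_cases hm : m ≤ n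
    · rw [Nat.choose_eq_zero_of_lt (show n - m < k by omega)]; ring
    · rw [Nat.choose_eq_zero_of_lt (show n < m by omega)]; ring

private lemma vdm (n m : ℕ) (hm : m ≤ n) :
    ∑ k ∈ Finset.range (n/2+1), m.choose k * (n-m).choose k = n.choose m := by
  have base : ∑ k ∈ Finset.range (m+1), m.choose k * (n-m).choose (m-k) = n.choose m := by
    conv_rhs => rw [show n = m + (n-m) by omega]
    rw [Nat.add_choose_eq, Finset.Nat.sum_antidiagonal_eq_sum_range_succ_mk]
  have key : ∑ k ∈ Finset.range (m+1), m.choose k * (n-m).choose k = n.choose m := by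
    rw [← base, ← Finset.sum_range_reflect]
    apply Finset.sum_congr rfl
    intro j hj
    have hjm : j ≤ m := by simpa [Nat.lt_succ_iff] using hj
    rw [show m + 1 - 1 - j = m - j by omega, Nat.choose_symm hjm]
  rw [← key]
  have e1 : ∑ k ∈ Finset.range (m+1), m.choose k * (n-m).choose k
      = ∑ k ∈ Finset.range (n+1), m.choose k * (n-m).choose k := by
    apply Finset.sum_subset (Finset.range_subset_range.2 (by omega))
    intro x hx hx'
    have : m < x := by simp only [Finset.mem_range] at hx hx'; omega
    rw [Nat.choose_eq_zero_of_lt this, zero_mul]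
  have e2 : ∑ k ∈ Finset.range (n/2+1), m.choose k * (n-m).choose k
      = ∑ k ∈ Finset.range (n+1), m.choose k * (n-m).choose k := by
    apply Finset.sum_subset (Finset.range_subset_range.2 (by omega))
    intro x hx hx'
    simp only [Finset.mem_range] at hx hx'
    rcases (show m < x ∨ n - m < x by omega) with h | h
    · rw [Nat.choose_eq_zero_of_lt h, zero_mul]
    · rw [Nat.choose_eq_zero_of_lt h, mul_zero]
  rw [e1, e2]

private lemma keyNat (n m : ℕ) :
    (∑ k ∈ Finset.range (n/2+1),
        if k ≤ m then n.choose (2*k) * (2*k).choose k * (n-2*k).choose (m-k) else 0)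
      = n.choose m ^ 2 := by
  have step : ∀ k ∈ Finset.range (n/2+1),
      (if k ≤ m then n.choose (2*k) * (2*k).choose k * (n-2*k).choose (m-k) else 0)
        = n.choose m * (m.choose k * (n-m).choose k) := by
    intro k hk
    have h2 : 2*k ≤ n := by have := Finset.mem_range.mp hk; omega
    by_cases hkm : k ≤ m
    · rw [if_pos hkm, termA n m k h2 hkm]
    · rw [if_neg hkm, Nat.choose_eq_zero_of_lt (show m < k by omega)]; ring
  rw [Finset.sum_congr rfl step, ← Finset.mul_sum]
  by_cases hm : m ≤ n
  · rw [vdm n m hm]; ring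
  · rw [Nat.choose_eq_zero_of_lt (show n < m by omega)]; ring

theorem stmt10 (n : ℕ) :
    (∑ k ∈ Finset.range (n + 1), C ((n.choose k : ℤ) ^ 2) * X ^ k) =
      ∑ k ∈ Finset.range (n / 2 + 1),
        C ((n.choose (2 * k) : ℤ) * ((2 * k).choose k)) * X ^ k * (1 + X) ^ (n - 2 * k) := by
  ext m
  rw [finset_sum_coeff, finset_sum_coeff]
  simp only [mul_assoc, coeff_C_mul, coeff_X_pow, coeff_X_pow_mul', coeff_one_add_X_pow,
    mul_ite, mul_one, mul_zero]
  rw [Finset.sum_ite_eq]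
  have hkey : ((∑ k ∈ Finset.range (n/2+1),
      if k ≤ m then n.choose (2*k) * (2*k).choose k * (n-2*k).choose (m-k) else 0 : ℕ) : ℤ)
      = ((n.choose m : ℤ)) ^ 2 := by
    rw [keyNat n m]; push_cast; ring
  rw [Nat.cast_sum] at hkey
  simp only [Nat.cast_ite, Nat.cast_mul, Nat.cast_zero] at hkey
  rw [show (∑ k ∈ Finset.range (n/2+1), if k ≤ m then (↑(n.choose (2*k)) *
      (↑((2*k).choose k) * ((n-2*k).choose (m-k) : ℤ))) else 0) = ((n.choose m : ℤ))^2 by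
    rw [← hkey]; apply Finset.sum_congr rfl; intro k _; split <;> ring]
  by_cases hm : m ∈ Finset.range (n+1)
  · rw [if_pos hm]
  · rw [if_neg hm, Nat.choose_eq_zero_of_lt (by simpa [Nat.lt_succ_iff, not_le] using hm)]
    norm_num
end

section
/- For all nonnegative integers n, sum_{k=0}^n binom(n,k)^2 x^{2k} (1+x)^{2n-2k} = sum_{k=0}^n binom(n,k) binom(2k,k) x^k (1+x)^k. -/
open Polynomial Finset

lemma aux_coeff_pow {R : Type*} [CommRing R] (a b : R) (n k : ℕ) :
    ((C a * X + C b) ^ n).coeff k = (n.choose k : R) * a ^ k * b ^ (n - k) := by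
  rw [add_pow, finset_sum_coeff]
  have h : ∀ i ∈ range (n + 1),
      (((C a * X) ^ i * C b ^ (n - i) * ((n.choose i : ℕ) : R[X])).coeff k)
        = if k = i then (n.choose i : R) * a ^ i * b ^ (n - i) else 0 := by
    intro i _
    have e : (C a * X) ^ i * C b ^ (n - i) * ((n.choose i : ℕ) : R[X])
        = C ((n.choose i : R) * a ^ i * b ^ (n - i)) * X ^ i := by
      rw [← C_eq_natCast]
      simp only [mul_pow, map_mul, map_pow]
      ring
    rw [e, coeff_C_mul, coeff_X_pow]
    by_cases h : k = i <;> simp [h]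
  rw [Finset.sum_congr rfl h, Finset.sum_ite_eq (range (n + 1)) k]
  by_cases hk : k ∈ range (n + 1)
  · simp [hk]
  · simp only [hk, if_false]
    have : n.choose k = 0 := Nat.choose_eq_zero_of_lt (by simpa using hk)
    simp [this]

theorem stmt11 (n : ℕ) :
    (∑ k ∈ Finset.range (n + 1),
        C ((n.choose k : ℤ) ^ 2) * X ^ (2 * k) * (1 + X) ^ (2 * n - 2 * k)) =
      ∑ k ∈ Finset.range (n + 1),
        C ((n.choose k : ℤ) * ((2 * k).choose k)) * X ^ k * (1 + X) ^ k := by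
  set R := Polynomial ℤ
  set A : R[X] := C X * X + C (1 + X) with hA
  set B : R[X] := C (1 + X) * X + C X with hB
  have hAB : A * B = C (X * (1 + X)) * (1 + X) ^ 2 + X := by
    rw [hA, hB]
    simp only [map_mul, map_add, map_one]
    ring
  have hL : ((A * B) ^ n).coeff n =
      ∑ k ∈ Finset.range (n + 1),
        C ((n.choose k : ℤ) ^ 2) * X ^ (2 * k) * (1 + X) ^ (2 * n - 2 * k) := by
    rw [mul_pow, coeff_mul, Finset.Nat.sum_antidiagonal_eq_sum_range_succ_mk]
    apply Finset.sum_congr rfl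
    intro i hi
    have hin : i ≤ n := by simpa [Nat.lt_succ_iff] using hi
    rw [hA, hB, aux_coeff_pow, aux_coeff_pow, Nat.choose_symm hin,
      show n - (n - i) = i from by omega,
      show 2 * n - 2 * i = (n - i) + (n - i) from by omega,
      show 2 * i = i + i from by omega, pow_add, pow_add]
    simp only [map_pow, C_eq_natCast]
    ring
  have hR : ((C (X * (1 + X)) * (1 + X) ^ 2 + X) ^ n).coeff n =
      ∑ k ∈ Finset.range (n + 1),
        C ((n.choose k : ℤ) * ((2 * k).choose k)) * X ^ k * (1 + X) ^ k := by
    rw [add_pow, finset_sum_coeff]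
    apply Finset.sum_congr rfl
    intro k hk
    have hkn : k ≤ n := by simpa [Nat.lt_succ_iff] using hk
    have e : (C (X * (1 + X)) * (1 + X) ^ 2) ^ k * X ^ (n - k) * ((n.choose k : ℕ) : R[X])
        = C ((X * (1 + X)) ^ k * (n.choose k : R)) * ((1 + X) ^ (2 * k)) * X ^ (n - k) := by
      rw [← C_eq_natCast]
      simp only [mul_pow, map_mul, map_pow, ← pow_mul]
      ring
    rw [e, coeff_mul_X_pow', if_pos (by omega : n - k ≤ n), coeff_C_mul,
      show n - (n - k) = k from by omega, coeff_one_add_X_pow]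
    simp only [map_mul, map_pow, C_eq_natCast, mul_pow]
    ring
  rw [← hL, hAB, hR]
end

section
/- For all nonnegative integers n, N(A_n, x^2) = sum_{k=0}^n C_{k+1} binom(n,k) (-x)^k (1+x)^{2n-2k}, where N(A_n,x) = sum_{k=0}^n (1/(n+1)) binom(n+1,k+1) binom(n+1,k) x^k and C_m is the m-th Catalan number. In particular N(A_n,x^2) is alternatingly gamma-positive. -/
/-!
Both sides satisfy the three-term recurrence
`(n + 4) Y_{n+2} = (2n + 5)(1 + x²) Y_{n+1} - (n + 1)(1 - x²)² Y_n`
and agree for `n = 0, 1`. For the left side this is the substitution `x ↦ x²` in the classical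
recurrence `(n + 4) N_{n+2} = (2n + 5)(1 + x) N_{n+1} - (n + 1)(1 - x)² N_n` of the Narayana
polynomials. The right side is the homogenization `∑ₖ aₖ uᵏ v^(n-k)` of
`P_n(t) = ∑ₖ C_{k+1} (n choose k) tᵏ`, evaluated at `u = -x`, `v = (1 + x)²`; homogenizing
the recurrence `(n + 4) P_{n+2} = (2n + 5)(1 + 2t) P_{n+1} - (n + 1)(1 + 4t) P_n` gives the
one above, since `v + 2u = 1 + x²` and `v (v + 4u) = (1 - x²)²`.
Both coefficient recurrences become identities of rational functions once every binomial
coefficient is written as a rational multiple of `(n + 1 choose k)`.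
-/

open Polynomial Finset

/-- The type A Narayana polynomial `N(A_n, x)`. -/
noncomputable def narayanaA (n : ℕ) : Polynomial ℚ :=
  ∑ k ∈ Finset.range (n + 1),
    C ((1 / ((n : ℚ) + 1)) * ((n + 1).choose (k + 1)) * ((n + 1).choose k)) * X ^ k

section CastChoose

variable {F : Type*} [Field F] [CharZero F]

theorem Nat.cast_add_one_choose_add_one (n k : ℕ) :
    ((n + 1).choose (k + 1) : F) = (n + 1) / (k + 1) * n.choose k := by
  rw [div_mul_eq_mul_div, eq_div_iff k.cast_add_one_ne_zero]
  exact_mod_cast (Nat.add_one_mul_choose_eq n k).symm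

theorem Nat.cast_choose_add_one (n k : ℕ) :
    (n.choose (k + 1) : F) = (n - k) / (k + 1) * n.choose k := by
  rw [div_mul_eq_mul_div, eq_div_iff k.cast_add_one_ne_zero, mul_comm _ (n.choose k : F)]
  rcases le_or_gt k n with h | h
  · rw [← Nat.cast_sub h]
    exact_mod_cast Nat.choose_succ_right_eq n k
  · simp [Nat.choose_eq_zero_of_lt h, Nat.choose_eq_zero_of_lt (Nat.lt_succ_of_lt h)]

theorem Nat.cast_choose_eq_div_mul_add_one_choose (n k : ℕ) :
    (n.choose k : F) = (n + 1 - k) / (n + 1) * (n + 1).choose k := by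
  rw [div_mul_eq_mul_div, eq_div_iff n.cast_add_one_ne_zero, mul_comm _ ((n + 1).choose k : F)]
  rcases le_or_gt k (n + 1) with h | h
  · rw [← Nat.cast_one, ← Nat.cast_add, ← Nat.cast_sub h]
    exact_mod_cast Nat.choose_mul_succ_eq n k
  · simp [Nat.choose_eq_zero_of_lt h, Nat.choose_eq_zero_of_lt (Nat.lt_of_succ_lt h)]

theorem cast_catalan_add_one (n : ℕ) :
    (catalan (n + 1) : F) = 2 * (2 * n + 1) / (n + 2) * catalan n := by
  have h1 : ((n + 2 : ℕ) : F) * catalan (n + 1) = (n + 1).centralBinom := by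
    exact_mod_cast succ_mul_catalan_eq_centralBinom (n + 1)
  have h2 : ((n + 1 : ℕ) : F) * (n + 1).centralBinom = 2 * (2 * n + 1) * n.centralBinom := by
    exact_mod_cast Nat.succ_mul_centralBinom_succ n
  have h3 : ((n + 1 : ℕ) : F) * catalan n = n.centralBinom := by
    exact_mod_cast succ_mul_catalan_eq_centralBinom n
  have hn1 : ((n + 1 : ℕ) : F) ≠ 0 := Nat.cast_ne_zero.mpr n.succ_ne_zero
  have hn2 : ((n + 2 : ℕ) : F) ≠ 0 := Nat.cast_ne_zero.mpr (n + 1).succ_ne_zero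
  push_cast at hn1 hn2 h1 h2 h3
  rw [div_mul_eq_mul_div, eq_div_iff hn2]
  refine mul_left_cancel₀ hn1 ?_
  linear_combination (n + 1 : F) * h1 + h2 - 2 * (2 * n + 1 : F) * h3

end CastChoose

theorem eq_of_three_term_rec {R : Type*} [Ring R] [NoZeroDivisors R] {f g : ℕ → R}
    (a b c : ℕ → R) (ha : ∀ n, a n ≠ 0)
    (hf : ∀ n, a n * f (n + 2) = b n * f (n + 1) - c n * f n)
    (hg : ∀ n, a n * g (n + 2) = b n * g (n + 1) - c n * g n)
    (h0 : f 0 = g 0) (h1 : f 1 = g 1) : f = g := by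
  funext n
  induction n using Nat.twoStepInduction with
  | zero => exact h0
  | one => exact h1
  | more n hn hn1 => exact mul_left_cancel₀ (ha n) (by rw [hf, hg, hn, hn1])

/-- The Narayana number `N(n + 1, k + 1)`. -/
def narayana (n k : ℕ) : ℚ := 1 / ((n : ℚ) + 1) * (n + 1).choose (k + 1) * (n + 1).choose k

theorem coeff_narayanaA (n k : ℕ) : (narayanaA n).coeff k = narayana n k := by
  rw [narayanaA, finsetSum_coeff]
  simp only [coeff_C_mul_X_pow]
  rw [sum_ite_eq, narayana]
  split_ifs with h
  · rfl
  · rw [Nat.choose_eq_zero_of_lt (by simp at h; omega : n + 1 < k + 1)]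
    simp

theorem narayana_rec (n k : ℕ) :
    ((n : ℚ) + 4) * narayana (n + 2) (k + 2) =
      (2 * n + 5) * (narayana (n + 1) (k + 2) + narayana (n + 1) (k + 1))
        - (n + 1) * (narayana n (k + 2) - 2 * narayana n (k + 1) + narayana n k) := by
  simp only [narayana, Nat.cast_add_one_choose_add_one (F := ℚ)]
  simp only [Nat.cast_choose_add_one (F := ℚ)]
  rw [Nat.cast_choose_eq_div_mul_add_one_choose (F := ℚ) n k]
  push_cast
  field_simp
  ring

theorem narayanaA_rec (n : ℕ) :
    C ((n : ℚ) + 4) * narayanaA (n + 2) =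
      C (2 * (n : ℚ) + 5) * (1 + X) * narayanaA (n + 1)
        - C ((n : ℚ) + 1) * (1 - X) ^ 2 * narayanaA n := by
  have expand (p : ℚ[X]) : (1 - X) ^ 2 * p = p - C 2 * (X * p) + X * (X * p) := by
    rw [map_ofNat]
    ring
  rw [mul_assoc, mul_assoc, expand, add_mul, one_mul]
  ext (_ | _ | k) <;>
    simp only [coeff_C_mul, coeff_add, coeff_sub, coeff_X_mul, coeff_X_mul_zero, coeff_narayanaA]
  case succ.succ => exact narayana_rec n k
  all_goals
    simp only [narayana, Nat.cast_add_one_choose_add_one (F := ℚ), Nat.choose_zero_right,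
      Nat.choose_one_right]
    push_cast
    field_simp
    ring

theorem narayanaA_comp_X_sq_rec (n : ℕ) :
    C ((n : ℚ) + 4) * (narayanaA (n + 2)).comp (X ^ 2) =
      C (2 * (n : ℚ) + 5) * (1 + X ^ 2) * (narayanaA (n + 1)).comp (X ^ 2)
        - C ((n : ℚ) + 1) * (1 - X ^ 2) ^ 2 * (narayanaA n).comp (X ^ 2) := by
  have h := congrArg (fun p : ℚ[X] => p.comp (X ^ 2)) (narayanaA_rec n)
  simp only [mul_comp, sub_comp, add_comp, pow_comp, C_comp, one_comp, X_comp] at h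
  exact h

noncomputable def catalanBinomPoly (n : ℕ) : ℚ[X] :=
  ∑ k ∈ range (n + 1), C ((catalan (k + 1) : ℚ) * n.choose k) * X ^ k

theorem coeff_catalanBinomPoly (n k : ℕ) :
    (catalanBinomPoly n).coeff k = catalan (k + 1) * n.choose k := by
  rw [catalanBinomPoly, finsetSum_coeff]
  simp only [coeff_C_mul_X_pow]
  rw [sum_ite_eq]
  split_ifs with h
  · rfl
  · rw [Nat.choose_eq_zero_of_lt (by simp at h; omega : n < k)]
    simp

theorem natDegree_catalanBinomPoly_le (n : ℕ) : (catalanBinomPoly n).natDegree ≤ n :=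
  natDegree_sum_le_of_forall_le _ _ fun k hk =>
    (natDegree_C_mul_X_pow_le _ k).trans (Nat.lt_succ_iff.mp (mem_range.mp hk))

theorem catalan_mul_choose_rec (n k : ℕ) :
    ((n : ℚ) + 4) * (catalan (k + 2) * (n + 2).choose (k + 1)) =
      (2 * n + 5) * (catalan (k + 2) * (n + 1).choose (k + 1)
          + 2 * (catalan (k + 1) * (n + 1).choose k))
        - (n + 1) * (catalan (k + 2) * n.choose (k + 1) + 4 * (catalan (k + 1) * n.choose k)) := by
  simp only [cast_catalan_add_one (k + 1), Nat.cast_add_one_choose_add_one (F := ℚ)]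
  simp only [Nat.cast_choose_add_one (F := ℚ)]
  rw [Nat.cast_choose_eq_div_mul_add_one_choose (F := ℚ) n k]
  push_cast
  field_simp
  ring

theorem catalanBinomPoly_rec (n : ℕ) :
    C ((n : ℚ) + 4) * catalanBinomPoly (n + 2) =
      C (2 * (n : ℚ) + 5) * ((1 + C 2 * X) * catalanBinomPoly (n + 1))
        - C ((n : ℚ) + 1) * ((1 + C 4 * X) * catalanBinomPoly n) := by
  simp only [add_mul, one_mul, mul_assoc]
  ext (_ | k) <;>
    simp only [coeff_C_mul, coeff_add, coeff_sub, coeff_X_mul, coeff_X_mul_zero,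
      coeff_catalanBinomPoly]
  · simp only [Nat.choose_zero_right, Nat.cast_one, mul_one, mul_zero, add_zero]
    ring
  · exact catalan_mul_choose_rec n k

section Homogenize

variable {A : Type*} [CommRing A] [Algebra ℚ A]

theorem aeval_homogenize_catalanBinomPoly (u v : A) (n : ℕ) :
    MvPolynomial.aeval ![u, v] ((catalanBinomPoly n).homogenize n) =
      ∑ k ∈ range (n + 1),
        algebraMap ℚ A (catalan (k + 1) * n.choose k) * u ^ k * v ^ (n - k) := by
  rw [catalanBinomPoly, homogenize_finsetSum, map_sum]
  refine sum_congr rfl fun k hk => ?_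
  rw [homogenize_C_mul, homogenize_X_pow (Nat.lt_succ_iff.mp (mem_range.mp hk))]
  simp [mul_assoc]

theorem aeval_homogenize_catalanBinomPoly_rec (x : Fin 2 → A) (n : ℕ) :
    ((n : A) + 4) * MvPolynomial.aeval x ((catalanBinomPoly (n + 2)).homogenize (n + 2)) =
      (2 * n + 5) * (x 1 + 2 * x 0) *
          MvPolynomial.aeval x ((catalanBinomPoly (n + 1)).homogenize (n + 1))
        - (n + 1) * (x 1 * (x 1 + 4 * x 0)) *
          MvPolynomial.aeval x ((catalanBinomPoly n).homogenize n) := by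
  have homogenize_mul_succ : ((1 + C 2 * X) * catalanBinomPoly (n + 1)).homogenize (n + 2) =
      (.X 1 + .C 2 * .X 0) * (catalanBinomPoly (n + 1)).homogenize (n + 1) := by
    rw [show n + 2 = 1 + (n + 1) by omega,
      homogenize_mul _ _ (by compute_degree!) (natDegree_catalanBinomPoly_le _)]
    simp
  have homogenize_mul_self : ((1 + C 4 * X) * catalanBinomPoly n).homogenize (n + 2) =
      (.X 1 * (.X 1 + .C 4 * .X 0)) * (catalanBinomPoly n).homogenize n := by
    rw [show n + 2 = 2 + n by omega,
      homogenize_mul _ _ (by compute_degree!) (natDegree_catalanBinomPoly_le _)]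
    simp only [homogenize_add, homogenize_one, homogenize_C_mul, homogenize_X two_ne_zero]
    ring
  have h := congrArg (fun p => MvPolynomial.aeval x (p.homogenize (n + 2))) (catalanBinomPoly_rec n)
  simp only [homogenize_sub, homogenize_C_mul, homogenize_mul_succ, homogenize_mul_self] at h
  simpa [mul_assoc, map_ofNat] using h

end Homogenize

theorem stmt12 (n : ℕ) :
    (narayanaA n).comp (X ^ 2) =
      ∑ k ∈ Finset.range (n + 1),
        C ((catalan (k + 1) : ℚ) * (n.choose k)) * (-X) ^ k * (1 + X) ^ (2 * n - 2 * k) := by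
  have homogenized (m : ℕ) :
      ∑ k ∈ range (m + 1),
          C ((catalan (k + 1) : ℚ) * m.choose k) * (-X) ^ k * (1 + X) ^ (2 * m - 2 * k)
        = MvPolynomial.aeval ![-X, (1 + X) ^ 2] ((catalanBinomPoly m).homogenize m) := by
    rw [aeval_homogenize_catalanBinomPoly]
    refine sum_congr rfl fun k _ => ?_
    rw [algebraMap_eq, ← Nat.mul_sub, pow_mul]
  suffices h : (fun m => (narayanaA m).comp (X ^ 2)) = fun m =>
      ∑ k ∈ range (m + 1),
        C ((catalan (k + 1) : ℚ) * m.choose k) * (-X) ^ k * (1 + X) ^ (2 * m - 2 * k)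
    from congrFun h n
  refine eq_of_three_term_rec (fun m => C ((m : ℚ) + 4))
    (fun m => C (2 * (m : ℚ) + 5) * (1 + X ^ 2)) (fun m => C ((m : ℚ) + 1) * (1 - X ^ 2) ^ 2)
    (fun m => ?_) narayanaA_comp_X_sq_rec (fun m => ?_) ?_ ?_
  · rw [Ne, C_eq_zero]
    positivity
  · have h := aeval_homogenize_catalanBinomPoly_rec ![(-X : ℚ[X]), (1 + X) ^ 2] m
    simp only [Matrix.cons_val_zero, Matrix.cons_val_one] at h
    simp only [homogenized]
    simp only [map_add, map_mul, map_natCast, map_ofNat, map_one]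
    linear_combination h
  · simp [narayanaA]
  · norm_num [narayanaA, sum_range_succ, catalan_two, -map_mul, map_ofNat]
    ring
end

section
/- For all nonnegative integers n, N(B_n, x^2) = sum_{k=0}^n binom(n,k) binom(2k,k) (-x)^k (1+x)^{2n-2k}, where N(B_n,x) = sum_{k=0}^n binom(n,k)^2 x^k. In particular N(B_n,x^2) is alternatingly gamma-positive. -/
open Polynomial Finset

/-- The type B Narayana polynomial `N(B_n, x)`. -/
noncomputable def narayanaB (n : ℕ) : Polynomial ℤ :=
  ∑ k ∈ Finset.range (n + 1), C ((n.choose k : ℤ) ^ 2) * X ^ k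

private lemma coeff_X_sub_C_pow {R : Type*} [CommRing R] (a : R) (n k : ℕ) :
    ((X - C a) ^ n).coeff k = (-a) ^ (n - k) * n.choose k := by
  rw [sub_eq_add_neg, ← C_neg, coeff_X_add_C_pow]

private lemma coeff_one_sub_C_mul_X_pow {R : Type*} [CommRing R] (a : R) (n j : ℕ) :
    ((1 - C a * X) ^ n).coeff j = (-a) ^ j * n.choose j := by
  have h : (1 : R[X]) - C a * X = C (-a) * X + 1 := by rw [C_neg]; ring
  rw [h, add_pow, finset_sum_coeff]
  simp only [one_pow, mul_one, mul_pow, ← C_pow, ← C_eq_natCast,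
    mul_right_comm _ (X ^ _), ← C_mul, coeff_C_mul, coeff_X_pow, mul_ite, mul_one, mul_zero,
    Finset.sum_ite_eq, Finset.mem_range]
  by_cases hj : j < n + 1
  · simp [hj]
  · rw [Nat.choose_eq_zero_of_lt (by omega : n < j)]
    simp [hj]

theorem stmt13 (n : ℕ) :
    (narayanaB n).comp (X ^ 2) =
      ∑ k ∈ Finset.range (n + 1),
        C ((n.choose k : ℤ) * ((2 * k).choose k)) * (-X) ^ k * (1 + X) ^ (2 * n - 2 * k) := by
  have base : ((X : (Polynomial ℤ)[X]) - C X) * (1 - C X * X)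
      = (1 + C X) ^ 2 * X - C X * (1 + X) ^ 2 := by ring
  -- Left side: coeff n of ((z - x)(1 - xz))^n equals N(B_n, x²)
  have hL : ((((X : (Polynomial ℤ)[X]) - C X) * (1 - C X * X)) ^ n).coeff n
      = (narayanaB n).comp (X ^ 2) := by
    rw [mul_pow, coeff_mul, Finset.Nat.sum_antidiagonal_eq_sum_range_succ_mk]
    simp only [coeff_X_sub_C_pow, coeff_one_sub_C_mul_X_pow]
    rw [← Finset.sum_range_reflect]
    simp only [narayanaB, Polynomial.sum_comp, mul_comp, C_comp, X_pow_comp, ← pow_mul]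
    refine Finset.sum_congr rfl fun k hk => ?_
    rw [Finset.mem_range] at hk
    have h1 : n.succ - 1 - k = n - k := by omega
    rw [h1, Nat.sub_sub_self (by omega : k ≤ n), Nat.choose_symm (by omega : k ≤ n)]
    have h2 : ((-X : Polynomial ℤ) ^ k) * (-X) ^ k = X ^ (2 * k) := by
      rw [← pow_add, ← two_mul, Even.neg_pow (even_two_mul k)]
    rw [mul_mul_mul_comm, h2]
    simp only [pow_two, map_mul, C_eq_natCast]
    ring
  -- Right side: coeff n of ((1+x)²z - x(1+z)²)^n equals the gamma expansion
  have hR : (((1 + C X) ^ 2 * X - C X * (1 + (X : (Polynomial ℤ)[X])) ^ 2) ^ n).coeff n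
      = ∑ k ∈ Finset.range (n + 1),
        C ((n.choose k : ℤ) * ((2 * k).choose k)) * (-X) ^ k * (1 + X) ^ (2 * n - 2 * k) := by
    have hb : (1 + C X) ^ 2 * X - C X * (1 + (X : (Polynomial ℤ)[X])) ^ 2
        = C ((1 + X) ^ 2) * X + C (-X) * (1 + X) ^ 2 := by
      simp only [map_pow, map_add, map_one, C_neg]; ring
    rw [hb, add_pow, finset_sum_coeff]
    have hterm : ∀ k ∈ Finset.range (n + 1),
        ((C ((1 + X : Polynomial ℤ) ^ 2) * X) ^ k * (C (-X) * (1 + X) ^ 2) ^ (n - k)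
            * ((n.choose k : ℕ) : (Polynomial ℤ)[X])).coeff n
        = (1 + X) ^ (2 * k) * (-X) ^ (n - k) * (((2 * (n - k)).choose (n - k) : ℕ) : Polynomial ℤ) * ((n.choose k : ℕ) : Polynomial ℤ) := by
      intro k hk
      rw [Finset.mem_range] at hk
      have hre : (C ((1 + X : Polynomial ℤ) ^ 2) * X) ^ k * (C (-X) * (1 + X) ^ 2) ^ (n - k)
            * ((n.choose k : ℕ) : (Polynomial ℤ)[X])
          = C ((1 + X) ^ (2 * k) * (-X) ^ (n - k) * ((n.choose k : Polynomial ℤ)))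
            * (X ^ k * (1 + X) ^ (2 * (n - k))) := by
        simp only [mul_pow, ← C_pow, ← pow_mul, ← C_eq_natCast, C_mul]
        ring
      rw [hre, coeff_C_mul]
      obtain ⟨m, rfl⟩ : ∃ m, n = m + k := ⟨n - k, by omega⟩
      simp only [Nat.add_sub_cancel]
      rw [coeff_X_pow_mul, coeff_one_add_X_pow]
      ring
    rw [Finset.sum_congr rfl hterm, ← Finset.sum_range_reflect]
    refine Finset.sum_congr rfl fun k hk => ?_
    rw [Finset.mem_range] at hk
    have h1 : n.succ - 1 - k = n - k := by omega
    rw [h1, Nat.sub_sub_self (by omega : k ≤ n), Nat.choose_symm (by omega : k ≤ n)]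
    have h2 : 2 * (n - k) = 2 * n - 2 * k := by omega
    rw [h2]
    simp only [map_mul, C_eq_natCast]
    ring
  rw [← hL, base, hR]
end

section
/- For all nonnegative integers n, sum_{k=0}^n C_{k+1} binom(n,k) x^k = sum_{k=0}^{floor(n/2)} C_k binom(n,2k) x^{2k} (1+2x)^{n-2k}, where C_m is the m-th Catalan number. -/
/-!
Comparing coefficients of `X ^ m` and using
`binom(n, 2k) binom(n - 2k, m - 2k) = binom(n, m) binom(m, 2k)`, the identity becomes
`binom(n, m)` times Touchard's identity `C_{m+1} = ∑ₖ C_k binom(m, 2k) 2^(m - 2k)`.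
Since `C_k = binom(2k, k) - binom(2k, k + 1)` and `C_{m+1} = binom(2m, m) - binom(2m, m + 2)`,
Touchard's identity is the difference of the cases `r = 0` and `r = 2` of
`∑ₖ binom(m, 2k + r) binom(2k + r, k) 2^(m - 2k - r) = binom(2m, m + r)`, which is the
coefficient of `X ^ (m + r)` in `(1 + X) ^ (2m) = (1 + X (X + 2)) ^ m`.
-/

open Polynomial Finset

theorem Finset.sum_range_eq_sum_range_div_two_succ {M : Type*} [AddCommMonoid M] {f : ℕ → M}
    {m N : ℕ} (hN : m / 2 < N) (hf : ∀ k, m < 2 * k → f k = 0) :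
    ∑ k ∈ range N, f k = ∑ k ∈ range (m / 2 + 1), f k :=
  (sum_subset (range_subset_range.2 hN) fun k _ hk => hf k (by simp at hk; omega)).symm

theorem catalan_add_choose_succ (k : ℕ) :
    catalan k + (2 * k).choose (k + 1) = (2 * k).choose k := by
  have hcat := succ_mul_catalan_eq_centralBinom k
  have hsucc := Nat.choose_succ_right_eq (2 * k) k
  rw [Nat.centralBinom_eq_two_mul_choose] at hcat
  rw [show 2 * k - k = k by omega] at hsucc
  apply Nat.eq_of_mul_eq_mul_left k.succ_pos
  linarith

theorem catalan_succ_add_choose (m : ℕ) :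
    catalan (m + 1) + (2 * m).choose (m + 2) = (2 * m).choose m := by
  have h := catalan_add_choose_succ (m + 1)
  have h₁ : (2 * (m + 1)).choose (m + 1 + 1) =
      (2 * m + 1).choose (m + 1) + (2 * m + 1).choose (m + 2) := Nat.choose_succ_succ' _ _
  have h₂ : (2 * (m + 1)).choose (m + 1) =
      (2 * m + 1).choose m + (2 * m + 1).choose (m + 1) := Nat.choose_succ_succ' _ _
  have h₃ : (2 * m + 1).choose (m + 2) = (2 * m).choose (m + 1) + (2 * m).choose (m + 2) :=
    Nat.choose_succ_succ' _ _
  have h₄ : (2 * m + 1).choose m = (2 * m).choose m + (2 * m).choose (m + 1) := by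
    rw [← Nat.choose_symm_half, Nat.choose_succ_succ']
  omega

theorem coeff_one_add_two_mul_X_pow {R : Type*} [CommSemiring R] (N t : ℕ) :
    (((1 : R[X]) + 2 * X) ^ N).coeff t = 2 ^ t * (N.choose t : R) := by
  have h : (1 : R[X]) + 2 * X = (1 + X).comp (C 2 * X) := by simp [map_ofNat]
  rw [h, ← pow_comp, comp_C_mul_X_coeff, coeff_one_add_X_pow, mul_comm]

theorem sum_choose_mul_choose_mul_two_pow (m r : ℕ) :
    ∑ k ∈ range (m + 1), m.choose (2 * k + r) * (2 * k + r).choose k * 2 ^ (m - 2 * k - r) =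
      (2 * m).choose (m + r) := by
  have hsq : ((1 : ℕ[X]) + X) ^ (2 * m) =
      ∑ j ∈ range (m + 1), X ^ j * ((X + C 2) ^ j * (m.choose j : ℕ[X])) := by
    rw [pow_mul, show ((1 : ℕ[X]) + X) ^ 2 = X * (X + C 2) + 1 by rw [map_ofNat]; ring, add_pow]
    simp only [one_pow, mul_one, mul_pow, mul_assoc]
  have h := congrArg (coeff · (m + r)) hsq
  simp only [coeff_one_add_X_pow, finsetSum_coeff, coeff_X_pow_mul', coeff_mul_natCast,
    coeff_X_add_C_pow, Nat.cast_id] at h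
  rw [← sum_range_reflect] at h
  rw [h]
  refine sum_congr rfl fun k hk => ?_
  have hk : k ≤ m := by simp at hk; omega
  rw [if_pos (by omega), show m + 1 - 1 - k = m - k by omega, show m + r - (m - k) = k + r by omega,
    show m - k - (k + r) = m - 2 * k - r by omega, Nat.choose_symm hk,
    Nat.choose_mul (by omega), show 2 * k + r - k = k + r by omega]
  ring

theorem sum_choose_two_mul_mul_choose_mul_two_pow (m : ℕ) :
    ∑ k ∈ range (m / 2 + 1), m.choose (2 * k) * (2 * k).choose k * 2 ^ (m - 2 * k) =
      (2 * m).choose m := by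
  have h := sum_choose_mul_choose_mul_two_pow m 0
  simp only [add_zero, Nat.sub_zero] at h
  rw [← h]
  exact (sum_range_eq_sum_range_div_two_succ (by omega) fun k hk => by
    rw [Nat.choose_eq_zero_of_lt hk, zero_mul, zero_mul]).symm

theorem sum_choose_two_mul_mul_choose_succ_mul_two_pow (m : ℕ) :
    ∑ k ∈ range (m / 2 + 1), m.choose (2 * k) * (2 * k).choose (k + 1) * 2 ^ (m - 2 * k) =
      (2 * m).choose (m + 2) := by
  rw [← sum_choose_mul_choose_mul_two_pow m 2,
    ← sum_range_eq_sum_range_div_two_succ (N := m + 2) (by omega) fun k hk => by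
      rw [Nat.choose_eq_zero_of_lt hk, zero_mul, zero_mul], sum_range_succ']
  simp only [mul_zero, Nat.choose_zero_succ, zero_mul, add_zero]
  refine sum_congr rfl fun k _ => ?_
  rw [← Nat.choose_symm_of_eq_add (show 2 * (k + 1) = k + (k + 1 + 1) by ring)]
  congr 2

theorem catalan_succ_eq_sum (m : ℕ) :
    catalan (m + 1) =
      ∑ k ∈ range (m / 2 + 1), catalan k * m.choose (2 * k) * 2 ^ (m - 2 * k) := by
  apply Nat.add_right_cancel (m := (2 * m).choose (m + 2))
  rw [catalan_succ_add_choose, ← sum_choose_two_mul_mul_choose_mul_two_pow,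
    ← sum_choose_two_mul_mul_choose_succ_mul_two_pow, ← sum_add_distrib]
  refine sum_congr rfl fun k _ => ?_
  rw [← catalan_add_choose_succ k]
  ring

theorem choose_mul_coeff_X_pow_mul_one_add_two_mul_X_pow {R : Type*} [CommSemiring R]
    (n j m : ℕ) :
    (n.choose j : R) * (X ^ j * (1 + 2 * X) ^ (n - j)).coeff m =
      n.choose m * m.choose j * 2 ^ (m - j) := by
  rw [coeff_X_pow_mul']
  split_ifs with hjm
  · have h := congrArg (Nat.cast : ℕ → R) (Nat.choose_mul (n := n) hjm)
    push_cast at h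
    rw [coeff_one_add_two_mul_X_pow, h]
    ring
  · rw [Nat.choose_eq_zero_of_lt (not_le.1 hjm)]
    simp

theorem stmt14 (n : ℕ) :
    (∑ k ∈ Finset.range (n + 1), C ((catalan (k + 1) : ℤ) * (n.choose k)) * X ^ k) =
      ∑ k ∈ Finset.range (n / 2 + 1),
        C ((catalan k : ℤ) * (n.choose (2 * k))) * X ^ (2 * k) * (1 + 2 * X) ^ (n - 2 * k) := by
  ext m
  have hlhs : (∑ k ∈ range (n + 1), C ((catalan (k + 1) : ℤ) * n.choose k) * X ^ k).coeff m =
      (catalan (m + 1) * n.choose m : ℤ) := by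
    rw [finsetSum_coeff, sum_eq_single m (fun k _ hkm => by rw [coeff_C_mul_X_pow, if_neg hkm.symm])
      fun hm => by rw [Nat.choose_eq_zero_of_lt (by simpa using hm)]; simp]
    rw [coeff_C_mul_X_pow, if_pos rfl]
  simp only [hlhs, finsetSum_coeff, mul_assoc, coeff_C_mul,
    choose_mul_coeff_X_pow_mul_one_add_two_mul_X_pow]
  suffices catalan (m + 1) * n.choose m =
      ∑ k ∈ range (n / 2 + 1),
        catalan k * (n.choose m * (m.choose (2 * k) * 2 ^ (m - 2 * k))) by
    exact_mod_cast this
  rcases le_or_gt m n with hmn | hmn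
  · rw [catalan_succ_eq_sum, sum_mul, ← sum_range_eq_sum_range_div_two_succ (N := n / 2 + 1)
      (by omega) fun k hk => by rw [Nat.choose_eq_zero_of_lt hk]; simp]
    exact sum_congr rfl fun k _ => by ring
  · simp [Nat.choose_eq_zero_of_lt hmn]
end

section
/- For all nonnegative integers n, sum_{k=0}^n binom(n,k) binom(2k,k) x^k = sum_{k=0}^{floor(n/2)} binom(n,2k) binom(2k,k) x^{2k} (1+2x)^{n-2k}. -/
open Polynomial Finset

lemma coeff_one_add_X_sq {R : Type*} [CommSemiring R] (m : ℕ) :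
    (((1:Polynomial R) + X^2)^m).coeff m = if 2 ∣ m then (m.choose (m/2) : R) else 0 := by
  rw [add_pow, finset_sum_coeff]
  have key : ∀ j ∈ range (m+1), (((1:Polynomial R))^j * (X^2)^(m-j) * (m.choose j : Polynomial R)).coeff m
      = if m = 2*(m-j) then (m.choose j : R) else 0 := by
    intro j hj
    rw [one_pow, ← pow_mul, mul_comm, ← C_eq_natCast, coeff_C_mul, one_mul, coeff_X_pow]
    simp only [mul_ite, mul_one, mul_zero]
  rw [Finset.sum_congr rfl key]
  by_cases h2 : 2 ∣ m
  · obtain ⟨k, rfl⟩ := h2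
    rw [Finset.sum_eq_single k]
    · have : 2*k = 2*(2*k - k) := by omega
      rw [if_pos this, if_pos (dvd_mul_right 2 k), Nat.mul_div_cancel_left k (by norm_num)]
    · intro j hj hne
      rw [mem_range] at hj
      rw [if_neg (by omega)]
    · intro h; exact absurd (mem_range.mpr (by omega)) h
  · rw [if_neg h2]
    apply Finset.sum_eq_zero
    intro j hj
    rw [if_neg (fun h => h2 ⟨m - j, by omega⟩)]

lemma sum_even {M : Type*} [AddCommMonoid M] (n : ℕ) (g : ℕ → M) (h : ∀ m, ¬ 2 ∣ m → g m = 0) :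
    ∑ m ∈ range (n+1), g m = ∑ k ∈ range (n/2+1), g (2*k) := by
  have himg : (range (n+1)).filter (fun m => 2 ∣ m) = (range (n/2+1)).image (2 * ·) := by
    ext m
    simp only [mem_filter, mem_range, mem_image]
    constructor
    · rintro ⟨hm, j, rfl⟩; exact ⟨j, by omega, rfl⟩
    · rintro ⟨j, hj, rfl⟩; exact ⟨by omega, j, rfl⟩
  rw [← Finset.sum_filter_of_ne (fun m _ hg => by by_contra hc; exact hg (h m hc)), himg,
    Finset.sum_image (fun a _ b _ hab => by omega)]


theorem stmt15 (n : ℕ) :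
    (∑ k ∈ Finset.range (n + 1), C ((n.choose k : ℤ) * ((2 * k).choose k)) * X ^ k) =
      ∑ k ∈ Finset.range (n / 2 + 1),
        C ((n.choose (2 * k) : ℤ) * ((2 * k).choose k)) * X ^ (2 * k) *
          (1 + 2 * X) ^ (n - 2 * k) := by
  set x : Polynomial (Polynomial ℤ) := C X with hx
  set Q : Polynomial (Polynomial ℤ) := x * (1 + X)^2 + X with hQ
  have hA : (Q^n).coeff n = ∑ k ∈ Finset.range (n + 1),
      C ((n.choose k : ℤ) * ((2 * k).choose k)) * X ^ k := by
    rw [hQ, add_pow, finset_sum_coeff]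
    refine Finset.sum_congr rfl fun k hk => ?_
    rw [mem_range, Nat.lt_succ_iff] at hk
    obtain ⟨d, rfl⟩ : ∃ d, n = k + d := ⟨n - k, by omega⟩
    simp only [Nat.add_sub_cancel_left]
    have : x ^ k * ((1:Polynomial (Polynomial ℤ)) + X)^(2*k) * X^d * ((k+d).choose k : Polynomial (Polynomial ℤ))
        = C (((k+d).choose k : Polynomial ℤ) * X^k) * (((1 + X)^(2*k)) * X^d) := by
      simp only [hx, C_mul, C_pow, map_natCast]
      ring
    rw [mul_pow, ← pow_mul, mul_assoc (x^k), ← mul_assoc, this, coeff_C_mul,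
      coeff_mul_X_pow, coeff_one_add_X_pow]
    simp only [C_mul, C_eq_natCast]
    push_cast
    ring
  have hB : (Q^n).coeff n = ∑ k ∈ Finset.range (n / 2 + 1),
      C ((n.choose (2 * k) : ℤ) * ((2 * k).choose k)) * X ^ (2 * k) * (1 + 2 * X) ^ (n - 2 * k) := by
    have hQ' : Q = x * (1 + X^2) + C (1 + 2*X) * X := by
      rw [hQ, hx]
      simp only [C_add, C_mul, C_1, map_ofNat]
      ring
    rw [hQ', add_pow, finset_sum_coeff]
    rw [sum_even n _ (fun m hm => ?_)]
    · refine Finset.sum_congr rfl fun k hk => ?_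
      rw [mem_range, Nat.lt_succ_iff] at hk
      obtain ⟨d, hd⟩ : ∃ d, n = 2*k + d := ⟨n - 2*k, by omega⟩
      subst hd
      simp only [Nat.add_sub_cancel_left]
      have : (x * ((1:Polynomial (Polynomial ℤ)) + X^2))^(2*k) * (C (1 + 2*X) * X)^d * (((2*k+d).choose (2*k)) : Polynomial (Polynomial ℤ))
          = C (((2*k+d).choose (2*k) : Polynomial ℤ) * X^(2*k) * (1+2*X)^d) * (((1 + X^2)^(2*k)) * X^d) := by
        simp only [hx, mul_pow, C_mul, C_pow, C_add, C_1, map_natCast, map_ofNat]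
        ring
      rw [this, coeff_C_mul, coeff_mul_X_pow, coeff_one_add_X_sq,
        if_pos (dvd_mul_right 2 k), Nat.mul_div_cancel_left k (by norm_num)]
      simp only [C_mul, C_eq_natCast, C_pow, C_add, C_1, map_ofNat]
      push_cast
      ring
    · rcases le_or_gt m n with hmn | hmn
      · obtain ⟨d, hd⟩ : ∃ d, n = m + d := ⟨n - m, by omega⟩
        subst hd
        simp only [Nat.add_sub_cancel_left]
        have : (x * ((1:Polynomial (Polynomial ℤ)) + X^2))^m * (C (1 + 2*X) * X)^d * (((m+d).choose m) : Polynomial (Polynomial ℤ))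
            = C (((m+d).choose m : Polynomial ℤ) * X^m * (1+2*X)^d) * (((1 + X^2)^m) * X^d) := by
          simp only [hx, mul_pow, C_mul, C_pow, C_add, C_1, map_natCast, map_ofNat]
          ring
        rw [this, coeff_C_mul, coeff_mul_X_pow, coeff_one_add_X_sq, if_neg hm, mul_zero]
      · rw [Nat.choose_eq_zero_of_lt hmn]
        simp
  rw [← hA, hB]
end

section
/- For every n >= 1 and every k with 0 <= k <= n+1, the numbers Nhat(n,k) = (n+1)! (1/n) binom(n,k) binom(n,k-1) and Mhat(n,k) = n! binom(n,k)^2 satisfy the recurrences Mhat(n+1,k) = (n+1+2k) Mhat(n,k) + (3n+3-2k) Mhat(n,k-1) and Nhat(n+1,k) = (n+2k) Nhat(n,k) + (3n+4-2k) Nhat(n,k-1). -/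
/-- `binom(n, k)` for an integer `k`, vanishing for `k < 0`. -/
def chooseZ (n : ℕ) (k : ℤ) : ℕ := if k < 0 then 0 else n.choose k.toNat

/-- `Mhat(n, k) = n! binom(n, k)²`. -/
def Mhat (n : ℕ) (k : ℤ) : ℚ := (n.factorial : ℚ) * (chooseZ n k) ^ 2

/-- `Nhat(n, k) = (n+1)! (1/n) binom(n, k) binom(n, k-1)`. -/
def Nhat (n : ℕ) (k : ℤ) : ℚ :=
  ((n + 1).factorial : ℚ) * (1 / (n : ℚ)) * (chooseZ n k) * (chooseZ n (k - 1))

lemma chooseZ_natCast (n m : ℕ) : chooseZ n (m : ℤ) = n.choose m := by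
  simp [chooseZ]

lemma chooseZ_neg (n : ℕ) {k : ℤ} (hk : k < 0) : chooseZ n k = 0 := by
  simp [chooseZ, hk]

theorem stmt19 (n : ℕ) (hn : 1 ≤ n) (k : ℤ) (hk0 : 0 ≤ k) (hk1 : k ≤ (n : ℤ) + 1) :
    Mhat (n + 1) k = ((n : ℚ) + 1 + 2 * k) * Mhat n k + (3 * n + 3 - 2 * k) * Mhat n (k - 1) ∧
    Nhat (n + 1) k = ((n : ℚ) + 2 * k) * Nhat n k + (3 * n + 4 - 2 * k) * Nhat n (k - 1) := by
  lift k to ℕ using hk0 with m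
  have hn0 : (n : ℚ) ≠ 0 := by positivity
  have hn1 : ((n : ℚ) + 1) ≠ 0 := by positivity
  match m with
  | 0 =>
    constructor
    · norm_num [Mhat, chooseZ, Nat.factorial_succ]
    · norm_num [Nhat, chooseZ, Nat.factorial_succ]
  | 1 =>
    constructor
    · norm_num [Mhat, chooseZ, Nat.factorial_succ]
      ring
    · norm_num [Nhat, chooseZ, Nat.factorial_succ]
      field_simp
      ring
  | (j + 2) =>
    have hj1 : j + 1 ≤ n := by exact_mod_cast (by push_cast at hk1 ⊢; linarith : ((j:ℤ) + 1) ≤ n)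
    have hj : j ≤ n := le_trans (Nat.le_succ j) hj1
    have hnj : ((n : ℚ) - j) ≠ 0 := by
      have : (j : ℚ) < n := by exact_mod_cast lt_of_lt_of_le (Nat.lt_succ_self j) hj1
      linarith
    set a : ℚ := (n.choose (j + 2) : ℚ) with ha_def
    set b : ℚ := (n.choose (j + 1) : ℚ) with hb_def
    set c : ℚ := (n.choose j : ℚ) with hc_def
    have h1 : a * ((j : ℚ) + 2) = b * ((n : ℚ) - (j + 1)) := by
      have := Nat.choose_succ_right_eq n (j + 1)
      have hcast : ((n - (j + 1) : ℕ) : ℚ) = (n : ℚ) - (j + 1) := by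
        push_cast [Nat.cast_sub hj1]; ring
      rw [ha_def, hb_def, ← hcast]
      exact_mod_cast congrArg (Nat.cast : ℕ → ℚ) this
    have h2 : b * ((j : ℚ) + 1) = c * ((n : ℚ) - j) := by
      have := Nat.choose_succ_right_eq n j
      have hcast : ((n - j : ℕ) : ℚ) = (n : ℚ) - j := by
        push_cast [Nat.cast_sub hj]; ring
      rw [hb_def, hc_def, ← hcast]
      exact_mod_cast congrArg (Nat.cast : ℕ → ℚ) this
    have hA : ((n + 1).choose (j + 2) : ℚ) = b + a := by
      rw [ha_def, hb_def]; exact_mod_cast congrArg (Nat.cast : ℕ → ℚ) (Nat.choose_succ_succ n (j + 1))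
    have hB : ((n + 1).choose (j + 1) : ℚ) = c + b := by
      rw [hb_def, hc_def]; exact_mod_cast congrArg (Nat.cast : ℕ → ℚ) (Nat.choose_succ_succ n j)
    have ha : a = b * ((n : ℚ) - (j + 1)) / ((j : ℚ) + 2) := by
      field_simp
      linarith [h1]
    have hc : c = b * ((j : ℚ) + 1) / ((n : ℚ) - j) := by
      field_simp
      linarith [h2]
    have e1 : ((j + 2 : ℕ) : ℤ) - 1 = ((j + 1 : ℕ) : ℤ) := by push_cast; ring
    have e2 : ((j + 1 : ℕ) : ℤ) - 1 = ((j : ℕ) : ℤ) := by push_cast; ring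
    constructor
    · simp only [Mhat, chooseZ_natCast, e1, hA, ← ha_def, ← hb_def]
      rw [ha]
      have hfac : (((n + 1).factorial : ℕ) : ℚ) = ((n : ℚ) + 1) * (n.factorial : ℚ) := by
        push_cast [Nat.factorial_succ]; ring
      rw [hfac]
      push_cast
      field_simp
      ring
    · simp only [Nhat, chooseZ_natCast, e1, e2, hA, hB, ← ha_def, ← hb_def, ← hc_def]
      rw [ha, hc]
      have hfac2 : (((n + 1 + 1).factorial : ℕ) : ℚ)
          = ((n : ℚ) + 2) * ((n : ℚ) + 1) * (n.factorial : ℚ) := by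
        push_cast [Nat.factorial_succ]; ring
      have hfac1 : (((n + 1).factorial : ℕ) : ℚ) = ((n : ℚ) + 1) * (n.factorial : ℚ) := by
        push_cast [Nat.factorial_succ]; ring
      rw [hfac2, hfac1]
      push_cast
      field_simp
      ring
end
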